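/- arXiv:2104.11058 — 2 statements merged into one kernel-verified Lean document; each statement's English description precedes it below -/
import Mathlib

section
/- Let σ₁, σ₂ be a Legendre surface frame on U = I₁ × I₂ (a product of open intervals) such that at every point the span of σ₁, σ₂, ∂σ₁/∂u, ∂σ₂/∂u is at most 3-dimensional (the u-coordinate lines are curvature lines). Let 𝔭 ∈ V with B(𝔭, 𝔭) = −1, and let λ : U → V be smooth and nowhere zero with λ(x) ∈ C(x) and B(λ, 𝔭) = 0 on U (a lift of the point sphere map with respect to 𝔭), such that for every x ∈ U and every nonzero X ∈ ℝ², the directional derivative ∂_Xλ(x) does not lie in span{λ(x)} (the point sphere map immerses). Suppose ν : U → V is smooth with B(ν, ν) = 0, ∂ν/∂u = 0, B(ν, λ) = 0, B(ν, 𝔭) nowhere zero, and such that at every point x ∈ U neither ν(x) nor ν(x) + 2B(ν(x), 𝔭)𝔭 lies in C(x)^⊥ (the sphere congruence ν is constant along the u-lines, contains the point sphere map, and meets the surface transversally). Then there exists a smooth l : U → V with B(l, l) = 1, B(l, σ₁) = B(l, σ₂) = 0 and ∂l/∂u = 0 on U; that is, there is a spacelike rank-1 subbundle L = ⟨l⟩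 of C^⊥ that is constant along the u-lines. -/
noncomputable section

/-- `V6 = ℝ⁶`. -/
abbrev V6 : Type := Fin 6 → ℝ

/-- The symmetric bilinear form of signature (4,2) on `V6`. -/
def bB6 (x y : V6) : ℝ :=
  x 0 * y 0 + x 1 * y 1 + x 2 * y 2 + x 3 * y 3 - x 4 * y 4 - x 5 * y 5

/-- The skew-symmetric endomorphism `a ∧ b` of `V6`. -/
def wedge6 (a b : V6) : V6 →L[ℝ] V6 :=
  LinearMap.toContinuousLinearMap
    { toFun := fun x => bB6 a x • b - bB6 b x • a
      map_add' := by
        intro x y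
        have h1 : bB6 a (x + y) = bB6 a x + bB6 a y := by simp [bB6]; ring
        have h2 : bB6 b (x + y) = bB6 b x + bB6 b y := by simp [bB6]; ring
        try dsimp only
        rw [h1, h2]; module
      map_smul' := by
        intro c x
        have h1 : bB6 a (c • x) = c * bB6 a x := by simp [bB6]; ring
        have h2 : bB6 b (c • x) = c * bB6 b x := by simp [bB6]; ring
        try dsimp only
        rw [h1, h2]
        simp only [RingHom.id_apply]
        module }

/-- The partial derivative in the `u`-direction. -/
def pu (σ : ℝ × ℝ → V6) (x : ℝ × ℝ) : V6 := fderiv ℝ σ x (1, 0)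

/-- The partial derivative in the `v`-direction. -/
def pv (σ : ℝ × ℝ → V6) (x : ℝ × ℝ) : V6 := fderiv ℝ σ x (0, 1)

/-- A Legendre surface frame on an open connected set `U ⊆ ℝ²`: the contact lift of a
surface in Lie sphere geometry. -/
structure LegendreSurfaceFrame (U : Set (ℝ × ℝ)) (σ₁ σ₂ : ℝ × ℝ → V6) : Prop where
  isOpen : IsOpen U
  conn : IsConnected U
  smooth₁ : ContDiffOn ℝ (⊤ : ℕ∞) σ₁ U
  smooth₂ : ContDiffOn ℝ (⊤ : ℕ∞) σ₂ U
  indep : ∀ x ∈ U, ∀ a b : ℝ, a • σ₁ x + b • σ₂ x = 0 → a = 0 ∧ b = 0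
  iso₁₁ : ∀ x ∈ U, bB6 (σ₁ x) (σ₁ x) = 0
  iso₁₂ : ∀ x ∈ U, bB6 (σ₁ x) (σ₂ x) = 0
  iso₂₂ : ∀ x ∈ U, bB6 (σ₂ x) (σ₂ x) = 0
  du₁₁ : ∀ x ∈ U, bB6 (pu σ₁ x) (σ₁ x) = 0
  du₁₂ : ∀ x ∈ U, bB6 (pu σ₁ x) (σ₂ x) = 0
  du₂₁ : ∀ x ∈ U, bB6 (pu σ₂ x) (σ₁ x) = 0
  du₂₂ : ∀ x ∈ U, bB6 (pu σ₂ x) (σ₂ x) = 0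
  dv₁₁ : ∀ x ∈ U, bB6 (pv σ₁ x) (σ₁ x) = 0
  dv₁₂ : ∀ x ∈ U, bB6 (pv σ₁ x) (σ₂ x) = 0
  dv₂₁ : ∀ x ∈ U, bB6 (pv σ₂ x) (σ₁ x) = 0
  dv₂₂ : ∀ x ∈ U, bB6 (pv σ₂ x) (σ₂ x) = 0
  legendre : ∀ x ∈ U, ∀ X : ℝ × ℝ, X ≠ 0 →
    ¬((∃ a b : ℝ, fderiv ℝ σ₁ x X = a • σ₁ x + b • σ₂ x) ∧
      (∃ a b : ℝ, fderiv ℝ σ₂ x X = a • σ₁ x + b • σ₂ x))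

namespace Stmt17Aux

lemma bB6_comm (x y : V6) : bB6 x y = bB6 y x := by simp [bB6]; ring

lemma bB6_add_left (x y z : V6) : bB6 (x + y) z = bB6 x z + bB6 y z := by
  simp [bB6]; ring

lemma bB6_sub_left (x y z : V6) : bB6 (x - y) z = bB6 x z - bB6 y z := by
  simp [bB6]; ring

lemma bB6_smul_left (c : ℝ) (x z : V6) : bB6 (c • x) z = c * bB6 x z := by
  simp [bB6]; ring

lemma bB6_add_right (x y z : V6) : bB6 z (x + y) = bB6 z x + bB6 z y := by
  simp [bB6]; ring

lemma bB6_sub_right (x y z : V6) : bB6 z (x - y) = bB6 z x - bB6 z y := by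
  simp [bB6]; ring

lemma bB6_smul_right (c : ℝ) (x z : V6) : bB6 z (c • x) = c * bB6 z x := by
  simp [bB6]; ring

lemma bB6_zero_left (z : V6) : bB6 0 z = 0 := by simp [bB6]

lemma bB6_zero_right (z : V6) : bB6 z 0 = 0 := by simp [bB6]

/-- Euclidean dot product on `V6`. -/
def dot6 (x y : V6) : ℝ :=
  x 0 * y 0 + x 1 * y 1 + x 2 * y 2 + x 3 * y 3 + x 4 * y 4 + x 5 * y 5

lemma dot6_pos {w : V6} (hw : w ≠ 0) : 0 < dot6 w w := by
  obtain ⟨i, hi⟩ := Function.ne_iff.mp hw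
  simp only [Pi.zero_apply] at hi
  have hsum : dot6 w w = ∑ j : Fin 6, (w j)^2 := by
    simp [dot6, Fin.sum_univ_six]; ring
  have h1 : (0:ℝ) < (w i)^2 := by positivity
  have h2 : (w i)^2 ≤ ∑ j : Fin 6, (w j)^2 :=
    Finset.single_le_sum (fun j _ => sq_nonneg (w j)) (Finset.mem_univ i)
  linarith [hsum ▸ (h1.trans_le h2)]

set_option maxHeartbeats 1000000 in
/-- Key signature fact: if `x, p` are two `bB6`-orthogonal timelike vectors and `m` is
isotropic and orthogonal to both, then `m = 0`. -/
lemma neg_lemma (x p m : V6) (hxp : bB6 x p = 0) (hxm : bB6 x m = 0) (hpm : bB6 p m = 0)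
    (hm : bB6 m m = 0) (hx : bB6 x x < 0) (hp : bB6 p p < 0) : m = 0 := by
  have hp45 : ¬(p 4 = 0 ∧ p 5 = 0) := by
    rintro ⟨h4, h5⟩
    have : bB6 p p = p 0 * p 0 + p 1 * p 1 + p 2 * p 2 + p 3 * p 3 := by
      simp [bB6, h4, h5]
    nlinarith [sq_nonneg (p 0), sq_nonneg (p 1), sq_nonneg (p 2), sq_nonneg (p 3)]
  have hS : 0 < p 4 ^ 2 + p 5 ^ 2 := by
    rcases not_and_or.mp hp45 with h | h
    · nlinarith [sq_nonneg (p 5), sq_pos_of_ne_zero h]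
    · nlinarith [sq_nonneg (p 4), sq_pos_of_ne_zero h]
  have hdet : x 4 * p 5 - x 5 * p 4 ≠ 0 := by
    intro hd
    set θ : ℝ := (x 4 * p 4 + x 5 * p 5) / (p 4 ^ 2 + p 5 ^ 2) with hθ
    have h4 : x 4 - θ * p 4 = 0 := by
      have : x 4 - θ * p 4 = p 5 * (x 4 * p 5 - x 5 * p 4) / (p 4 ^ 2 + p 5 ^ 2) := by
        rw [hθ]; field_simp; ring
      rw [this, hd]; simp
    have h5 : x 5 - θ * p 5 = 0 := by
      have : x 5 - θ * p 5 = - p 4 * (x 4 * p 5 - x 5 * p 4) / (p 4 ^ 2 + p 5 ^ 2) := by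
        rw [hθ]; field_simp; ring
      rw [this, hd]; simp
    set d : V6 := x - θ • p with hdd
    have e1 : bB6 d d = bB6 x x - 2 * θ * bB6 x p + θ^2 * bB6 p p := by
      simp [hdd, bB6, Pi.sub_apply, Pi.smul_apply]; ring
    have hd4 : d 4 = 0 := by simpa [hdd] using h4
    have hd5 : d 5 = 0 := by simpa [hdd] using h5
    have e2 : bB6 d d = (d 0)^2 + (d 1)^2 + (d 2)^2 + (d 3)^2 := by
      simp [bB6, hd4, hd5]; ring
    have hth : θ^2 * bB6 p p ≤ 0 :=
      mul_nonpos_of_nonneg_of_nonpos (sq_nonneg θ) hp.le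
    have hlt : bB6 d d < 0 := by rw [e1, hxp]; nlinarith
    have hge : 0 ≤ bB6 d d := by
      rw [e2]; positivity
    linarith
  set det : ℝ := x 4 * p 5 - x 5 * p 4 with hdetdef
  set α : ℝ := (m 4 * p 5 - m 5 * p 4) / det with hα
  set γ : ℝ := (x 4 * m 5 - x 5 * m 4) / det with hγ
  set y : V6 := m - α • x - γ • p with hy
  have hy4 : y 4 = 0 := by
    simp only [hy, Pi.sub_apply, Pi.smul_apply, smul_eq_mul]
    rw [hα, hγ]; field_simp; ring
  have hy5 : y 5 = 0 := by
    simp only [hy, Pi.sub_apply, Pi.smul_apply, smul_eq_mul]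
    rw [hα, hγ]; field_simp; ring
  have e1 : bB6 y y = α^2 * bB6 x x + γ^2 * bB6 p p := by
    have : bB6 y y = bB6 m m - 2*α*bB6 x m - 2*γ*bB6 p m + 2*α*γ*bB6 x p
        + α^2 * bB6 x x + γ^2 * bB6 p p := by
      simp [hy, bB6, Pi.sub_apply, Pi.smul_apply]; ring
    rw [this, hm, hxm, hpm, hxp]; ring
  have e2 : bB6 y y = (y 0)^2 + (y 1)^2 + (y 2)^2 + (y 3)^2 := by
    simp [bB6, hy4, hy5]; ring
  have ha : α^2 * bB6 x x ≤ 0 := mul_nonpos_of_nonneg_of_nonpos (sq_nonneg α) hx.le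
  have hg : γ^2 * bB6 p p ≤ 0 := mul_nonpos_of_nonneg_of_nonpos (sq_nonneg γ) hp.le
  have hyy0 : bB6 y y = 0 := by
    refine le_antisymm (by rw [e1]; linarith) ?_
    rw [e2]
    positivity
  have hα0 : α = 0 := by
    have h1 : α^2 * bB6 x x = 0 := by linarith [hyy0 ▸ e1]
    rcases mul_eq_zero.mp h1 with h | h
    · exact pow_eq_zero_iff (n := 2) (by norm_num) |>.mp h
    · exact absurd h hx.ne
  have hγ0 : γ = 0 := by
    have h1 : γ^2 * bB6 p p = 0 := by linarith [hyy0 ▸ e1]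
    rcases mul_eq_zero.mp h1 with h | h
    · exact pow_eq_zero_iff (n := 2) (by norm_num) |>.mp h
    · exact absurd h hp.ne
  have hym : y = m := by rw [hy, hα0, hγ0]; simp
  rw [hym] at hy4 hy5 hyy0 e2
  have hsq : (m 0)^2 + (m 1)^2 + (m 2)^2 + (m 3)^2 = 0 := by
    rw [← e2]; exact hyy0
  funext i
  have h0 : m 0 = 0 := by nlinarith [sq_nonneg (m 0), sq_nonneg (m 1), sq_nonneg (m 2), sq_nonneg (m 3)]
  have h1 : m 1 = 0 := by nlinarith [sq_nonneg (m 0), sq_nonneg (m 1), sq_nonneg (m 2), sq_nonneg (m 3)]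
  have h2 : m 2 = 0 := by nlinarith [sq_nonneg (m 0), sq_nonneg (m 1), sq_nonneg (m 2), sq_nonneg (m 3)]
  have h3 : m 3 = 0 := by nlinarith [sq_nonneg (m 0), sq_nonneg (m 1), sq_nonneg (m 2), sq_nonneg (m 3)]
  fin_cases i
  · exact h0
  · exact h1
  · exact h2
  · exact h3
  · exact hy4
  · exact hy5


lemma hasDerivAt_app {f : ℝ → V6} {f' : V6} {t : ℝ} (hf : HasDerivAt f f' t) (i : Fin 6) :
    HasDerivAt (fun s => f s i) (f' i) t := by
  have h := (ContinuousLinearMap.proj (R := ℝ) (φ := fun _ : Fin 6 => ℝ) i).hasFDerivAt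
    (x := f t) |>.comp_hasDerivAt t hf
  exact h

lemma hasDerivAt_bB6 {f g : ℝ → V6} {f' g' : V6} {t : ℝ}
    (hf : HasDerivAt f f' t) (hg : HasDerivAt g g' t) :
    HasDerivAt (fun s => bB6 (f s) (g s)) (bB6 f' (g t) + bB6 (f t) g') t := by
  have h0 := (hasDerivAt_app hf 0).mul (hasDerivAt_app hg 0)
  have h1 := (hasDerivAt_app hf 1).mul (hasDerivAt_app hg 1)
  have h2 := (hasDerivAt_app hf 2).mul (hasDerivAt_app hg 2)
  have h3 := (hasDerivAt_app hf 3).mul (hasDerivAt_app hg 3)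
  have h4 := (hasDerivAt_app hf 4).mul (hasDerivAt_app hg 4)
  have h5 := (hasDerivAt_app hf 5).mul (hasDerivAt_app hg 5)
  have h := ((((h0.add h1).add h2).add h3).sub h4).sub h5
  have heq : (fun s => bB6 (f s) (g s)) = fun s =>
      (f s 0 * g s 0 + f s 1 * g s 1 + f s 2 * g s 2 + f s 3 * g s 3
        - f s 4 * g s 4) - f s 5 * g s 5 := by
    funext s; simp only [bB6]
  rw [heq]
  exact h.congr_deriv (by simp only [bB6, dot6]; ring)

lemma hasDerivAt_dot6 {f g : ℝ → V6} {f' g' : V6} {t : ℝ}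
    (hf : HasDerivAt f f' t) (hg : HasDerivAt g g' t) :
    HasDerivAt (fun s => dot6 (f s) (g s)) (dot6 f' (g t) + dot6 (f t) g') t := by
  have h0 := (hasDerivAt_app hf 0).mul (hasDerivAt_app hg 0)
  have h1 := (hasDerivAt_app hf 1).mul (hasDerivAt_app hg 1)
  have h2 := (hasDerivAt_app hf 2).mul (hasDerivAt_app hg 2)
  have h3 := (hasDerivAt_app hf 3).mul (hasDerivAt_app hg 3)
  have h4 := (hasDerivAt_app hf 4).mul (hasDerivAt_app hg 4)
  have h5 := (hasDerivAt_app hf 5).mul (hasDerivAt_app hg 5)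
  have h := ((((h0.add h1).add h2).add h3).add h4).add h5
  have heq : (fun s => dot6 (f s) (g s)) = fun s =>
      ((((f s 0 * g s 0 + f s 1 * g s 1) + f s 2 * g s 2) + f s 3 * g s 3)
        + f s 4 * g s 4) + f s 5 * g s 5 := by
    funext s; simp only [dot6]
  rw [heq]
  exact h.congr_deriv (by simp only [bB6, dot6]; ring)

lemma contDiffOn_app {f : ℝ × ℝ → V6} {U : Set (ℝ × ℝ)} (hf : ContDiffOn ℝ (⊤ : ℕ∞) f U)
    (i : Fin 6) : ContDiffOn ℝ (⊤ : ℕ∞) (fun y => f y i) U :=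
  (ContinuousLinearMap.proj (R := ℝ) (φ := fun _ : Fin 6 => ℝ) i).contDiff.comp_contDiffOn hf

lemma contDiffOn_bB6 {f g : ℝ × ℝ → V6} {U : Set (ℝ × ℝ)}
    (hf : ContDiffOn ℝ (⊤ : ℕ∞) f U) (hg : ContDiffOn ℝ (⊤ : ℕ∞) g U) :
    ContDiffOn ℝ (⊤ : ℕ∞) (fun y => bB6 (f y) (g y)) U := by
  simp only [bB6]
  exact ((((((contDiffOn_app hf 0).mul (contDiffOn_app hg 0)).add
    ((contDiffOn_app hf 1).mul (contDiffOn_app hg 1))).add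
    ((contDiffOn_app hf 2).mul (contDiffOn_app hg 2))).add
    ((contDiffOn_app hf 3).mul (contDiffOn_app hg 3))).sub
    ((contDiffOn_app hf 4).mul (contDiffOn_app hg 4))).sub
    ((contDiffOn_app hf 5).mul (contDiffOn_app hg 5))

lemma contDiffOn_dot6 {f g : ℝ × ℝ → V6} {U : Set (ℝ × ℝ)}
    (hf : ContDiffOn ℝ (⊤ : ℕ∞) f U) (hg : ContDiffOn ℝ (⊤ : ℕ∞) g U) :
    ContDiffOn ℝ (⊤ : ℕ∞) (fun y => dot6 (f y) (g y)) U := by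
  simp only [dot6]
  exact ((((((contDiffOn_app hf 0).mul (contDiffOn_app hg 0)).add
    ((contDiffOn_app hf 1).mul (contDiffOn_app hg 1))).add
    ((contDiffOn_app hf 2).mul (contDiffOn_app hg 2))).add
    ((contDiffOn_app hf 3).mul (contDiffOn_app hg 3))).add
    ((contDiffOn_app hf 4).mul (contDiffOn_app hg 4))).add
    ((contDiffOn_app hf 5).mul (contDiffOn_app hg 5))


lemma bB6_pair_left (a b z : V6) (pp qq : ℝ) :
    bB6 (pp • a + qq • b) z = pp * bB6 a z + qq * bB6 b z := by
  simp [bB6, Pi.add_apply, Pi.smul_apply]; ring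

lemma bB6_pair_right (a b z : V6) (pp qq : ℝ) :
    bB6 z (pp • a + qq • b) = pp * bB6 z a + qq * bB6 z b := by
  simp [bB6, Pi.add_apply, Pi.smul_apply]; ring

lemma bB6_pair_pair (a b : V6) (p q r s : ℝ) :
    bB6 (p • a + q • b) (r • a + s • b)
      = p * r * bB6 a a + (p * s + q * r) * bB6 a b + q * s * bB6 b b := by
  simp [bB6, Pi.add_apply, Pi.smul_apply]; ring

lemma bB6_quad (u v w : V6) (a b : ℝ) :
    bB6 (u - a • v - b • w) (u - a • v - b • w)
      = bB6 u u - 2 * a * bB6 u v - 2 * b * bB6 u w + a ^ 2 * bB6 v v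
        + 2 * a * b * bB6 v w + b ^ 2 * bB6 w w := by
  simp [bB6, Pi.sub_apply, Pi.smul_apply]; ring

lemma bB6_lin (u v w z : V6) (a b : ℝ) :
    bB6 (u - a • v - b • w) z = bB6 u z - a * bB6 v z - b * bB6 w z := by
  simp [bB6, Pi.sub_apply, Pi.smul_apply]; ring


lemma dot6_comm (x y : V6) : dot6 x y = dot6 y x := by simp [dot6]; ring

lemma dot6_pair_left (a b z : V6) (pp qq : ℝ) :
    dot6 (pp • a + qq • b) z = pp * dot6 a z + qq * dot6 b z := by
  simp [dot6, Pi.add_apply, Pi.smul_apply]; ring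

lemma dot6_lin2 (u v : V6) (t : ℝ) :
    dot6 (u - t • v) (u - t • v) = dot6 u u - 2 * t * dot6 u v + t ^ 2 * dot6 v v := by
  simp [dot6, Pi.sub_apply, Pi.smul_apply]; ring

/-- If two vectors of `ℝ²` are orthogonal to a nonzero vector, they are parallel. -/
lemma perp2 {g1 g2 a1 a2 b1 b2 : ℝ} (ha : a1 * g1 + a2 * g2 = 0)
    (hb : b1 * g1 + b2 * g2 = 0) (hg : ¬(g1 = 0 ∧ g2 = 0)) : a1 * b2 = a2 * b1 := by
  rcases not_and_or.mp hg with h | h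
  · have h1 : (a1 * b2 - a2 * b1) * g1 = 0 := by linear_combination b2 * ha - a2 * hb
    have := mul_eq_zero.mp h1
    rcases this with h2 | h2
    · linarith
    · exact absurd h2 h
  · have h1 : (a1 * b2 - a2 * b1) * g2 = 0 := by linear_combination a1 * hb - b1 * ha
    have := mul_eq_zero.mp h1
    rcases this with h2 | h2
    · linarith
    · exact absurd h2 h

end Stmt17Aux

open Stmt17Aux in
/-- The factor of proportionality between `B(·,P)` and `B(·,ν)` on `C`. -/
def mu6 (σ₁ σ₂ ν : ℝ × ℝ → V6) (P : V6) (y : ℝ × ℝ) : ℝ :=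
  (bB6 (ν y) (σ₁ y) * bB6 (σ₁ y) P + bB6 (ν y) (σ₂ y) * bB6 (σ₂ y) P) /
    (bB6 (ν y) (σ₁ y) ^ 2 + bB6 (ν y) (σ₂ y) ^ 2)

def cc6 (σ₁ σ₂ ν : ℝ × ℝ → V6) (P : V6) (y : ℝ × ℝ) : ℝ :=
  -(1 + 2 * mu6 σ₁ σ₂ ν P y * bB6 (ν y) P)

def ll6 (σ₁ σ₂ ν : ℝ × ℝ → V6) (P : V6) (y : ℝ × ℝ) : V6 :=
  (Real.sqrt (cc6 σ₁ σ₂ ν P y))⁻¹ • (mu6 σ₁ σ₂ ν P y • ν y - P)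

open Stmt17Aux in
/-- Coefficients of `lm` in the basis `σ₁, σ₂` of `C`, via Cramer's rule for the
Euclidean Gram matrix. -/
def p6 (σ₁ σ₂ lm : ℝ × ℝ → V6) (y : ℝ × ℝ) : ℝ :=
  (dot6 (lm y) (σ₁ y) * dot6 (σ₂ y) (σ₂ y) - dot6 (lm y) (σ₂ y) * dot6 (σ₁ y) (σ₂ y)) /
    (dot6 (σ₁ y) (σ₁ y) * dot6 (σ₂ y) (σ₂ y) - dot6 (σ₁ y) (σ₂ y) ^ 2)

open Stmt17Aux in
def q6 (σ₁ σ₂ lm : ℝ × ℝ → V6) (y : ℝ × ℝ) : ℝ :=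
  (dot6 (lm y) (σ₂ y) * dot6 (σ₁ y) (σ₁ y) - dot6 (lm y) (σ₁ y) * dot6 (σ₁ y) (σ₂ y)) /
    (dot6 (σ₁ y) (σ₁ y) * dot6 (σ₂ y) (σ₂ y) - dot6 (σ₁ y) (σ₂ y) ^ 2)

open Stmt17Aux Topology

set_option maxHeartbeats 2000000 in
/-- if the `u`-coordinate lines are curvature lines lying on a sphere
congruence `ν` that is constant along the `u`-lines, contains the point sphere map, and
meets the surface transversally, then there is a spacelike rank-1 subbundle `L = ⟨l⟩` of
`C^⊥` constant along the `u`-lines. -/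
theorem stmt17 (I₁ I₂ : Set ℝ)
    (hI₁o : IsOpen I₁) (hI₁c : I₁.OrdConnected)
    (hI₂o : IsOpen I₂) (hI₂c : I₂.OrdConnected)
    (σ₁ σ₂ : ℝ × ℝ → V6) (h : LegendreSurfaceFrame (I₁ ×ˢ I₂) σ₁ σ₂)
    (hcurv : ∀ x ∈ I₁ ×ˢ I₂, Module.finrank ℝ
      ↥(Submodule.span ℝ ({σ₁ x, σ₂ x, pu σ₁ x, pu σ₂ x} : Set V6)) ≤ 3)
    (P : V6) (hP : bB6 P P = -1)
    (lm : ℝ × ℝ → V6) (hlms : ContDiffOn ℝ (⊤ : ℕ∞) lm (I₁ ×ˢ I₂))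
    (hlm0 : ∀ x ∈ I₁ ×ˢ I₂, lm x ≠ 0)
    (hlmC : ∀ x ∈ I₁ ×ˢ I₂, ∃ a b : ℝ, lm x = a • σ₁ x + b • σ₂ x)
    (hlmP : ∀ x ∈ I₁ ×ˢ I₂, bB6 (lm x) P = 0)
    (himm : ∀ x ∈ I₁ ×ˢ I₂, ∀ X : ℝ × ℝ, X ≠ 0 →
      fderiv ℝ lm x X ∉ Submodule.span ℝ ({lm x} : Set V6))
    (ν : ℝ × ℝ → V6) (hνs : ContDiffOn ℝ (⊤ : ℕ∞) ν (I₁ ×ˢ I₂))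
    (hν0 : ∀ x ∈ I₁ ×ˢ I₂, bB6 (ν x) (ν x) = 0)
    (hνu : ∀ x ∈ I₁ ×ˢ I₂, pu ν x = 0)
    (hνl : ∀ x ∈ I₁ ×ˢ I₂, bB6 (ν x) (lm x) = 0)
    (hνP : ∀ x ∈ I₁ ×ˢ I₂, bB6 (ν x) P ≠ 0)
    (htrans : ∀ x ∈ I₁ ×ˢ I₂,
      ¬(bB6 (ν x) (σ₁ x) = 0 ∧ bB6 (ν x) (σ₂ x) = 0) ∧
      ¬(bB6 (ν x + (2 * bB6 (ν x) P) • P) (σ₁ x) = 0 ∧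
        bB6 (ν x + (2 * bB6 (ν x) P) • P) (σ₂ x) = 0)) :
    ∃ l : ℝ × ℝ → V6, ContDiffOn ℝ (⊤ : ℕ∞) l (I₁ ×ˢ I₂) ∧
      (∀ x ∈ I₁ ×ˢ I₂, bB6 (l x) (l x) = 1) ∧
      (∀ x ∈ I₁ ×ˢ I₂, bB6 (l x) (σ₁ x) = 0) ∧
      (∀ x ∈ I₁ ×ˢ I₂, bB6 (l x) (σ₂ x) = 0) ∧
      (∀ x ∈ I₁ ×ˢ I₂, pu l x = 0) := by
  classical
  have hUo : IsOpen (I₁ ×ˢ I₂) := hI₁o.prod hI₂o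
  -- nonvanishing of (g₁, g₂)
  have hT : ∀ x ∈ I₁ ×ˢ I₂, 0 < bB6 (ν x) (σ₁ x) ^ 2 + bB6 (ν x) (σ₂ x) ^ 2 := by
    intro x hx
    rcases not_and_or.mp (htrans x hx).1 with hh | hh
    · nlinarith [sq_nonneg (bB6 (ν x) (σ₂ x)), sq_pos_of_ne_zero hh]
    · nlinarith [sq_nonneg (bB6 (ν x) (σ₁ x)), sq_pos_of_ne_zero hh]
  -- coefficients of lm
  have hlm_coef : ∀ x ∈ I₁ ×ˢ I₂, ∃ p q : ℝ,
      lm x = p • σ₁ x + q • σ₂ x ∧ ¬(p = 0 ∧ q = 0) := by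
    intro x hx
    obtain ⟨p, q, hab⟩ := hlmC x hx
    refine ⟨p, q, hab, ?_⟩
    rintro ⟨rfl, rfl⟩
    apply hlm0 x hx
    simpa using hab
  -- proportionality of B(·,P) and B(·,ν) on C
  have hmu : ∀ x ∈ I₁ ×ˢ I₂,
      bB6 (σ₁ x) P = mu6 σ₁ σ₂ ν P x * bB6 (ν x) (σ₁ x) ∧
      bB6 (σ₂ x) P = mu6 σ₁ σ₂ ν P x * bB6 (ν x) (σ₂ x) := by
    intro x hx
    obtain ⟨p, q, hab, hpq⟩ := hlm_coef x hx
    have hpg : p * bB6 (ν x) (σ₁ x) + q * bB6 (ν x) (σ₂ x) = 0 := by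
      have h0 := hνl x hx
      rw [hab, bB6_pair_right] at h0
      exact h0
    have hph : p * bB6 (σ₁ x) P + q * bB6 (σ₂ x) P = 0 := by
      have h0 := hlmP x hx
      rw [hab, bB6_pair_left] at h0
      exact h0
    have hdet : bB6 (ν x) (σ₁ x) * bB6 (σ₂ x) P = bB6 (ν x) (σ₂ x) * bB6 (σ₁ x) P :=
      perp2 (by linarith) (by linarith) hpq
    have hTx := hT x hx
    constructor
    · simp only [mu6]
      rw [div_mul_eq_mul_div, eq_div_iff (ne_of_gt hTx)]
      linear_combination (- bB6 (ν x) (σ₂ x)) * hdet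
    · simp only [mu6]
      rw [div_mul_eq_mul_div, eq_div_iff (ne_of_gt hTx)]
      linear_combination (bB6 (ν x) (σ₁ x)) * hdet
  -- second transversality: 1 + 2 μ β ≠ 0
  have hne : ∀ x ∈ I₁ ×ˢ I₂, 1 + 2 * mu6 σ₁ σ₂ ν P x * bB6 (ν x) P ≠ 0 := by
    intro x hx heq
    apply (htrans x hx).2
    constructor
    · rw [bB6_add_left, bB6_smul_left, bB6_comm P (σ₁ x), (hmu x hx).1]
      linear_combination (bB6 (ν x) (σ₁ x)) * heq
    · rw [bB6_add_left, bB6_smul_left, bB6_comm P (σ₂ x), (hmu x hx).2]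
      linear_combination (bB6 (ν x) (σ₂ x)) * heq
  -- positivity of cc6 (the signature argument)
  have hcpos : ∀ x ∈ I₁ ×ˢ I₂, 0 < cc6 σ₁ σ₂ ν P x := by
    intro x hx
    obtain ⟨p, q, hab, hpq⟩ := hlm_coef x hx
    have hm := hmu x hx
    have hβ := hνP x hx
    have hTx := hT x hx
    set g1 := bB6 (ν x) (σ₁ x) with hg1
    set g2 := bB6 (ν x) (σ₂ x) with hg2
    set μ := mu6 σ₁ σ₂ ν P x with hμ
    set β := bB6 (ν x) P with hβd
    set T := g1 ^ 2 + g2 ^ 2 with hTd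
    set τ : V6 := g1 • σ₁ x + g2 • σ₂ x with hτ
    set av : ℝ := T * (1 + μ * β) / β ^ 2 with hav
    set bv : ℝ := T / β with hbv
    set xv : V6 := τ - av • ν x - bv • P with hxvd
    have hττ : bB6 τ τ = 0 := by
      rw [hτ, bB6_pair_pair, h.iso₁₁ x hx, h.iso₁₂ x hx, h.iso₂₂ x hx]; ring
    have hτν : bB6 τ (ν x) = T := by
      rw [hτ, bB6_pair_left, bB6_comm (σ₁ x) (ν x), bB6_comm (σ₂ x) (ν x), ← hg1, ← hg2]
      rw [hTd]; ring
    have hτP : bB6 τ P = μ * T := by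
      rw [hτ, bB6_pair_left, hm.1, hm.2]; rw [hTd]; ring
    have hτlm : bB6 τ (lm x) = 0 := by
      rw [hτ, hab, bB6_pair_right, bB6_pair_left, bB6_pair_left,
        h.iso₁₁ x hx, h.iso₁₂ x hx, h.iso₂₂ x hx, bB6_comm (σ₂ x) (σ₁ x),
        h.iso₁₂ x hx]
      ring
    have hlmlm : bB6 (lm x) (lm x) = 0 := by
      rw [hab, bB6_pair_pair, h.iso₁₁ x hx, h.iso₁₂ x hx, h.iso₂₂ x hx]; ring
    have hxvlm : bB6 xv (lm x) = 0 := by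
      rw [hxvd, bB6_lin, hτlm, hνl x hx, bB6_comm P (lm x), hlmP x hx]; ring
    have hxvP : bB6 xv P = 0 := by
      rw [hxvd, bB6_lin, hτP, hP, hav, hbv]
      field_simp
      ring
    have hxvxv : bB6 xv xv = T ^ 2 / β ^ 2 * cc6 σ₁ σ₂ ν P x := by
      rw [hxvd, bB6_quad, hττ, hτν, hτP, hν0 x hx, hP]
      simp only [cc6, ← hμ, ← hβd]
      rw [hav, hbv]
      field_simp
      ring
    by_contra hcle
    push_neg at hcle
    have hccne : cc6 σ₁ σ₂ ν P x ≠ 0 := by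
      simp only [cc6, ← hμ, ← hβd]
      intro hh
      exact hne x hx (by linarith)
    have hclt : cc6 σ₁ σ₂ ν P x < 0 := lt_of_le_of_ne hcle hccne
    have hlt : bB6 xv xv < 0 := by
      rw [hxvxv]
      apply mul_neg_of_pos_of_neg _ hclt
      positivity
    have hPlt : bB6 P P < 0 := by rw [hP]; norm_num
    have := neg_lemma xv P (lm x) hxvP hxvlm
      (by rw [bB6_comm]; exact hlmP x hx) hlmlm hlt hPlt
    exact hlm0 x hx this
  -- smoothness of the candidate
  have hPc : ContDiffOn ℝ (⊤ : ℕ∞) (fun _ : ℝ × ℝ => P) (I₁ ×ˢ I₂) := contDiffOn_const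
  have hG1 : ContDiffOn ℝ (⊤ : ℕ∞) (fun y => bB6 (ν y) (σ₁ y)) (I₁ ×ˢ I₂) :=
    contDiffOn_bB6 hνs h.smooth₁
  have hG2 : ContDiffOn ℝ (⊤ : ℕ∞) (fun y => bB6 (ν y) (σ₂ y)) (I₁ ×ˢ I₂) :=
    contDiffOn_bB6 hνs h.smooth₂
  have hH1 : ContDiffOn ℝ (⊤ : ℕ∞) (fun y => bB6 (σ₁ y) P) (I₁ ×ˢ I₂) :=
    contDiffOn_bB6 h.smooth₁ hPc
  have hH2 : ContDiffOn ℝ (⊤ : ℕ∞) (fun y => bB6 (σ₂ y) P) (I₁ ×ˢ I₂) :=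
    contDiffOn_bB6 h.smooth₂ hPc
  have hmusm : ContDiffOn ℝ (⊤ : ℕ∞) (mu6 σ₁ σ₂ ν P) (I₁ ×ˢ I₂) := by
    have : ContDiffOn ℝ (⊤ : ℕ∞) (fun y =>
        (bB6 (ν y) (σ₁ y) * bB6 (σ₁ y) P + bB6 (ν y) (σ₂ y) * bB6 (σ₂ y) P) /
          (bB6 (ν y) (σ₁ y) ^ 2 + bB6 (ν y) (σ₂ y) ^ 2)) (I₁ ×ˢ I₂) :=
      ContDiffOn.div ((hG1.mul hH1).add (hG2.mul hH2)) ((hG1.pow 2).add (hG2.pow 2))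
        (fun x hx => ne_of_gt (hT x hx))
    exact this
  have hβsm : ContDiffOn ℝ (⊤ : ℕ∞) (fun y => bB6 (ν y) P) (I₁ ×ˢ I₂) :=
    contDiffOn_bB6 hνs hPc
  have hcsm : ContDiffOn ℝ (⊤ : ℕ∞) (cc6 σ₁ σ₂ ν P) (I₁ ×ˢ I₂) := by
    have : ContDiffOn ℝ (⊤ : ℕ∞) (fun y =>
        -(1 + 2 * mu6 σ₁ σ₂ ν P y * bB6 (ν y) P)) (I₁ ×ˢ I₂) :=
      (contDiffOn_const.add ((contDiffOn_const.mul hmusm).mul hβsm)).neg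
    exact this
  have hsqsm : ContDiffOn ℝ (⊤ : ℕ∞) (fun y => Real.sqrt (cc6 σ₁ σ₂ ν P y)) (I₁ ×ˢ I₂) := by
    intro x hx
    exact (Real.contDiffAt_sqrt (ne_of_gt (hcpos x hx))).comp_contDiffWithinAt x (hcsm x hx)
  have hsm : ContDiffOn ℝ (⊤ : ℕ∞) (ll6 σ₁ σ₂ ν P) (I₁ ×ˢ I₂) := by
    have hinv : ContDiffOn ℝ (⊤ : ℕ∞) (fun y => (Real.sqrt (cc6 σ₁ σ₂ ν P y))⁻¹)
        (I₁ ×ˢ I₂) :=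
      hsqsm.inv (fun x hx => ne_of_gt (Real.sqrt_pos.mpr (hcpos x hx)))
    have : ContDiffOn ℝ (⊤ : ℕ∞) (fun y =>
        (Real.sqrt (cc6 σ₁ σ₂ ν P y))⁻¹ • (mu6 σ₁ σ₂ ν P y • ν y - P)) (I₁ ×ˢ I₂) :=
      hinv.smul ((hmusm.smul hνs).sub hPc)
    exact this
  -- unit norm
  have hBll : ∀ x ∈ I₁ ×ˢ I₂, bB6 (ll6 σ₁ σ₂ ν P x) (ll6 σ₁ σ₂ ν P x) = 1 := by
    intro x hx
    have hc := hcpos x hx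
    have h1 : Real.sqrt (cc6 σ₁ σ₂ ν P x) * Real.sqrt (cc6 σ₁ σ₂ ν P x)
        = cc6 σ₁ σ₂ ν P x := Real.mul_self_sqrt hc.le
    have h2 : Real.sqrt (cc6 σ₁ σ₂ ν P x) ≠ 0 := ne_of_gt (Real.sqrt_pos.mpr hc)
    simp only [ll6, bB6_smul_left, bB6_smul_right, bB6_sub_left, bB6_sub_right]
    rw [hν0 x hx, hP, bB6_comm P (ν x)]
    field_simp
    rw [Real.sq_sqrt hc.le]; simp only [cc6]; ring
  -- orthogonality to σ₁ and σ₂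
  have hBl1 : ∀ x ∈ I₁ ×ˢ I₂, bB6 (ll6 σ₁ σ₂ ν P x) (σ₁ x) = 0 := by
    intro x hx
    simp only [ll6, bB6_smul_left, bB6_sub_left]
    rw [bB6_comm P (σ₁ x), (hmu x hx).1]
    ring
  have hBl2 : ∀ x ∈ I₁ ×ˢ I₂, bB6 (ll6 σ₁ σ₂ ν P x) (σ₂ x) = 0 := by
    intro x hx
    simp only [ll6, bB6_smul_left, bB6_sub_left]
    rw [bB6_comm P (σ₂ x), (hmu x hx).2]
    ring
  -- Gram determinant positivity
  have hDD : ∀ x ∈ I₁ ×ˢ I₂,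
      0 < dot6 (σ₁ x) (σ₁ x) * dot6 (σ₂ x) (σ₂ x) - dot6 (σ₁ x) (σ₂ x) ^ 2 := by
    intro x hx
    have hσ1ne : σ₁ x ≠ 0 := by
      intro h0
      have := h.indep x hx 1 0 (by simp [h0])
      exact one_ne_zero this.1
    have hA : 0 < dot6 (σ₁ x) (σ₁ x) := dot6_pos hσ1ne
    have hwne : σ₂ x - (dot6 (σ₁ x) (σ₂ x) / dot6 (σ₁ x) (σ₁ x)) • σ₁ x ≠ 0 := by
      intro h0
      have hcomb : (dot6 (σ₁ x) (σ₂ x) / dot6 (σ₁ x) (σ₁ x)) • σ₁ x + (-1 : ℝ) • σ₂ x = 0 := by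
        rw [show (dot6 (σ₁ x) (σ₂ x) / dot6 (σ₁ x) (σ₁ x)) • σ₁ x + (-1 : ℝ) • σ₂ x
          = -(σ₂ x - (dot6 (σ₁ x) (σ₂ x) / dot6 (σ₁ x) (σ₁ x)) • σ₁ x) from by module, h0]
        simp
      have := (h.indep x hx _ _ hcomb).2
      norm_num at this
    have hW := dot6_pos hwne
    rw [dot6_lin2, dot6_comm (σ₂ x) (σ₁ x)] at hW
    have h2 := mul_pos hA hW
    have h3 : dot6 (σ₁ x) (σ₁ x) * (dot6 (σ₂ x) (σ₂ x)
        - 2 * (dot6 (σ₁ x) (σ₂ x) / dot6 (σ₁ x) (σ₁ x)) * dot6 (σ₁ x) (σ₂ x)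
        + (dot6 (σ₁ x) (σ₂ x) / dot6 (σ₁ x) (σ₁ x)) ^ 2 * dot6 (σ₁ x) (σ₁ x))
        = dot6 (σ₁ x) (σ₁ x) * dot6 (σ₂ x) (σ₂ x) - dot6 (σ₁ x) (σ₂ x) ^ 2 := by
      field_simp
      ring
    rw [h3] at h2
    exact h2
  -- lm in the basis σ₁, σ₂ with smooth coefficients
  have hrepr : ∀ y ∈ I₁ ×ˢ I₂, lm y = p6 σ₁ σ₂ lm y • σ₁ y + q6 σ₁ σ₂ lm y • σ₂ y := by
    intro y hy
    obtain ⟨a, b, hab⟩ := hlmC y hy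
    have hDy := hDD y hy
    have hd1 : dot6 (lm y) (σ₁ y) = a * dot6 (σ₁ y) (σ₁ y) + b * dot6 (σ₁ y) (σ₂ y) := by
      rw [hab, dot6_pair_left, dot6_comm (σ₂ y) (σ₁ y)]
    have hd2 : dot6 (lm y) (σ₂ y) = a * dot6 (σ₁ y) (σ₂ y) + b * dot6 (σ₂ y) (σ₂ y) := by
      rw [hab, dot6_pair_left]
    have hpv : p6 σ₁ σ₂ lm y = a := by
      simp only [p6]; rw [hd1, hd2, div_eq_iff (ne_of_gt hDy)]; ring
    have hqv : q6 σ₁ σ₂ lm y = b := by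
      simp only [q6]; rw [hd1, hd2, div_eq_iff (ne_of_gt hDy)]; ring
    rw [hpv, hqv]; exact hab
  have hp6sm : ContDiffOn ℝ (⊤ : ℕ∞) (p6 σ₁ σ₂ lm) (I₁ ×ˢ I₂) := by
    have : ContDiffOn ℝ (⊤ : ℕ∞) (fun y =>
        (dot6 (lm y) (σ₁ y) * dot6 (σ₂ y) (σ₂ y) - dot6 (lm y) (σ₂ y) * dot6 (σ₁ y) (σ₂ y)) /
          (dot6 (σ₁ y) (σ₁ y) * dot6 (σ₂ y) (σ₂ y) - dot6 (σ₁ y) (σ₂ y) ^ 2)) (I₁ ×ˢ I₂) :=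
      ContDiffOn.div
        (((contDiffOn_dot6 hlms h.smooth₁).mul (contDiffOn_dot6 h.smooth₂ h.smooth₂)).sub
          ((contDiffOn_dot6 hlms h.smooth₂).mul (contDiffOn_dot6 h.smooth₁ h.smooth₂)))
        (((contDiffOn_dot6 h.smooth₁ h.smooth₁).mul (contDiffOn_dot6 h.smooth₂ h.smooth₂)).sub
          ((contDiffOn_dot6 h.smooth₁ h.smooth₂).pow 2))
        (fun x hx => ne_of_gt (hDD x hx))
    exact this
  have hq6sm : ContDiffOn ℝ (⊤ : ℕ∞) (q6 σ₁ σ₂ lm) (I₁ ×ˢ I₂) := by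
    have : ContDiffOn ℝ (⊤ : ℕ∞) (fun y =>
        (dot6 (lm y) (σ₂ y) * dot6 (σ₁ y) (σ₁ y) - dot6 (lm y) (σ₁ y) * dot6 (σ₁ y) (σ₂ y)) /
          (dot6 (σ₁ y) (σ₁ y) * dot6 (σ₂ y) (σ₂ y) - dot6 (σ₁ y) (σ₂ y) ^ 2)) (I₁ ×ˢ I₂) :=
      ContDiffOn.div
        (((contDiffOn_dot6 hlms h.smooth₂).mul (contDiffOn_dot6 h.smooth₁ h.smooth₁)).sub
          ((contDiffOn_dot6 hlms h.smooth₁).mul (contDiffOn_dot6 h.smooth₁ h.smooth₂)))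
        (((contDiffOn_dot6 h.smooth₁ h.smooth₁).mul (contDiffOn_dot6 h.smooth₂ h.smooth₂)).sub
          ((contDiffOn_dot6 h.smooth₁ h.smooth₂).pow 2))
        (fun x hx => ne_of_gt (hDD x hx))
    exact this
  have honez : ((1, 0) : ℝ × ℝ) ≠ 0 := by
    intro hh
    have := congrArg Prod.fst hh
    norm_num at this
  -- the key lemma: w := μ ν - P is orthogonal to pu σ₁ and pu σ₂
  have hKL : ∀ x ∈ I₁ ×ˢ I₂,
      bB6 (mu6 σ₁ σ₂ ν P x • ν x - P) (pu σ₁ x) = 0 ∧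
      bB6 (mu6 σ₁ σ₂ ν P x • ν x - P) (pu σ₂ x) = 0 := by
    intro x hx
    have hxn : I₁ ×ˢ I₂ ∈ 𝓝 x := hUo.mem_nhds hx
    have hι : HasDerivAt (fun t : ℝ => ((t, x.2) : ℝ × ℝ)) (1, 0) x.1 :=
      HasDerivAt.prodMk (hasDerivAt_id x.1) (hasDerivAt_const x.1 x.2)
    have hline : ∀ f : ℝ × ℝ → V6, DifferentiableAt ℝ f x →
        HasDerivAt (fun t => f (t, x.2)) (pu f x) x.1 := by
      intro f hf
      have h0 := hf.hasFDerivAt.comp_hasDerivAt x.1 hι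
      exact h0
    have hlineS : ∀ f : ℝ × ℝ → ℝ, DifferentiableAt ℝ f x →
        HasDerivAt (fun t => f (t, x.2)) (fderiv ℝ f x (1, 0)) x.1 := by
      intro f hf
      have h0 := hf.hasFDerivAt.comp_hasDerivAt x.1 hι
      exact h0
    have hdσ₁ : DifferentiableAt ℝ σ₁ x := (h.smooth₁.contDiffAt hxn).differentiableAt (by simp)
    have hdσ₂ : DifferentiableAt ℝ σ₂ x := (h.smooth₂.contDiffAt hxn).differentiableAt (by simp)
    have hdν : DifferentiableAt ℝ ν x := (hνs.contDiffAt hxn).differentiableAt (by simp)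
    have hdlm : DifferentiableAt ℝ lm x := (hlms.contDiffAt hxn).differentiableAt (by simp)
    have hdp : DifferentiableAt ℝ (p6 σ₁ σ₂ lm) x :=
      (hp6sm.contDiffAt hxn).differentiableAt (by simp)
    have hdq : DifferentiableAt ℝ (q6 σ₁ σ₂ lm) x :=
      (hq6sm.contDiffAt hxn).differentiableAt (by simp)
    have hL1 := hline σ₁ hdσ₁
    have hL2 := hline σ₂ hdσ₂
    have hLν : HasDerivAt (fun t => ν (t, x.2)) 0 x.1 := by
      have h0 := hline ν hdν; rwa [hνu x hx] at h0
    have hLlm := hline lm hdlm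
    have hLp := hlineS (p6 σ₁ σ₂ lm) hdp
    have hLq := hlineS (q6 σ₁ σ₂ lm) hdq
    have hev : ∀ᶠ t in 𝓝 x.1, ((t, x.2) : ℝ × ℝ) ∈ I₁ ×ˢ I₂ := by
      have hcont : ContinuousAt (fun t : ℝ => ((t, x.2) : ℝ × ℝ)) x.1 :=
        (continuous_id.prodMk continuous_const).continuousAt
      exact hcont.preimage_mem_nhds hxn
    have hνe : bB6 (ν x) (pu lm x) = 0 := by
      have hD1 := hasDerivAt_bB6 hLν hLlm
      have hD2 : HasDerivAt (fun t => bB6 (ν (t, x.2)) (lm (t, x.2))) 0 x.1 :=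
        (hasDerivAt_const x.1 0).congr_of_eventuallyEq (hev.mono fun t ht => hνl _ ht)
      have h0 := hD1.unique hD2
      simpa [bB6_zero_left] using h0
    have heP : bB6 (pu lm x) P = 0 := by
      have hD1 := hasDerivAt_bB6 hLlm (hasDerivAt_const x.1 P)
      have hD2 : HasDerivAt (fun t => bB6 (lm (t, x.2)) P) 0 x.1 :=
        (hasDerivAt_const x.1 0).congr_of_eventuallyEq (hev.mono fun t ht => hlmP _ ht)
      have h0 := hD1.unique hD2
      simpa [bB6_zero_right] using h0
    have hcomb : HasDerivAt (fun t => p6 σ₁ σ₂ lm (t, x.2) • σ₁ (t, x.2)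
        + q6 σ₁ σ₂ lm (t, x.2) • σ₂ (t, x.2))
        ((p6 σ₁ σ₂ lm x • pu σ₁ x + fderiv ℝ (p6 σ₁ σ₂ lm) x (1, 0) • σ₁ x)
          + (q6 σ₁ σ₂ lm x • pu σ₂ x + fderiv ℝ (q6 σ₁ σ₂ lm) x (1, 0) • σ₂ x)) x.1 :=
      (hLp.smul hL1).add (hLq.smul hL2)
    have hedec : pu lm x = (p6 σ₁ σ₂ lm x • pu σ₁ x + fderiv ℝ (p6 σ₁ σ₂ lm) x (1, 0) • σ₁ x)
        + (q6 σ₁ σ₂ lm x • pu σ₂ x + fderiv ℝ (q6 σ₁ σ₂ lm) x (1, 0) • σ₂ x) :=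
      hLlm.unique (hcomb.congr_of_eventuallyEq (hev.mono fun t ht => hrepr _ ht))
    have hdep : ¬ LinearIndependent ℝ ![σ₁ x, σ₂ x, pu σ₁ x, pu σ₂ x] := by
      intro hli
      have hr := finrank_span_eq_card hli
      have hrange : Set.range ![σ₁ x, σ₂ x, pu σ₁ x, pu σ₂ x]
          = ({σ₁ x, σ₂ x, pu σ₁ x, pu σ₂ x} : Set V6) := by
        ext z
        simp [Matrix.range_cons, Matrix.range_empty]
        tauto
      rw [hrange] at hr
      have h3 := hcurv x hx
      rw [hr] at h3
      simp at h3
    obtain ⟨cv, hcsum, i0, hci0⟩ := Fintype.not_linearIndependent_iff.mp hdep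
    have hcsum' : cv 0 • σ₁ x + cv 1 • σ₂ x + cv 2 • pu σ₁ x + cv 3 • pu σ₂ x = 0 := by
      have h0 := hcsum
      simp only [Fin.sum_univ_four, Matrix.cons_val_zero, Matrix.cons_val_one,
        Matrix.head_cons, Matrix.cons_val_two, Matrix.tail_cons, Matrix.cons_val_three] at h0
      exact h0
    have hwσ1 : bB6 (mu6 σ₁ σ₂ ν P x • ν x - P) (σ₁ x) = 0 := by
      rw [bB6_sub_left, bB6_smul_left, bB6_comm P (σ₁ x), (hmu x hx).1]; ring
    have hwσ2 : bB6 (mu6 σ₁ σ₂ ν P x • ν x - P) (σ₂ x) = 0 := by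
      rw [bB6_sub_left, bB6_smul_left, bB6_comm P (σ₂ x), (hmu x hx).2]; ring
    have hwe : bB6 (mu6 σ₁ σ₂ ν P x • ν x - P) (pu lm x) = 0 := by
      rw [bB6_sub_left, bB6_smul_left, hνe, bB6_comm P (pu lm x), heP]; ring
    have hrelA : cv 2 * bB6 (mu6 σ₁ σ₂ ν P x • ν x - P) (pu σ₁ x)
        + cv 3 * bB6 (mu6 σ₁ σ₂ ν P x • ν x - P) (pu σ₂ x) = 0 := by
      have h0 := congrArg (fun z => bB6 (mu6 σ₁ σ₂ ν P x • ν x - P) z) hcsum'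
      simp only [bB6_add_right, bB6_smul_right, bB6_zero_right, hwσ1, hwσ2] at h0
      linarith
    have hrelB : p6 σ₁ σ₂ lm x * bB6 (mu6 σ₁ σ₂ ν P x • ν x - P) (pu σ₁ x)
        + q6 σ₁ σ₂ lm x * bB6 (mu6 σ₁ σ₂ ν P x • ν x - P) (pu σ₂ x) = 0 := by
      have h0 := congrArg (fun z => bB6 (mu6 σ₁ σ₂ ν P x • ν x - P) z) hedec
      simp only [bB6_add_right, bB6_smul_right, hwσ1, hwσ2, hwe] at h0
      linarith
    have hpcqc : ¬(p6 σ₁ σ₂ lm x = 0 ∧ q6 σ₁ σ₂ lm x = 0) := by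
      rintro ⟨h1, h2⟩
      apply hlm0 x hx
      have h0 := hrepr x hx
      rw [h1, h2] at h0
      simpa using h0
    have hcv23 : ¬(cv 2 = 0 ∧ cv 3 = 0) := by
      rintro ⟨h2, h3⟩
      rw [h2, h3] at hcsum'
      simp only [zero_smul, add_zero] at hcsum'
      obtain ⟨e0, e1⟩ := h.indep x hx (cv 0) (cv 1) hcsum'
      fin_cases i0
      · exact hci0 e0
      · exact hci0 e1
      · exact hci0 h2
      · exact hci0 h3
    have hpg : p6 σ₁ σ₂ lm x * bB6 (ν x) (σ₁ x) + q6 σ₁ σ₂ lm x * bB6 (ν x) (σ₂ x) = 0 := by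
      have h0 := hνl x hx
      rw [hrepr x hx, bB6_pair_right] at h0
      exact h0
    have hdet : cv 2 * q6 σ₁ σ₂ lm x - cv 3 * p6 σ₁ σ₂ lm x ≠ 0 := by
      intro hd0
      -- pu lm x lies in C, hence in the span of lm x; contradiction with himm
      have hmem : pu lm x ∈ Submodule.span ℝ ({lm x} : Set V6) := by
        rcases not_and_or.mp hcv23 with h2 | h3
        · -- cv 2 ≠ 0
          obtain ⟨c1, c2, hec⟩ : ∃ c1 c2 : ℝ, cv 2 • pu lm x = c1 • σ₁ x + c2 • σ₂ x := by
            refine ⟨cv 2 * fderiv ℝ (p6 σ₁ σ₂ lm) x (1, 0) - p6 σ₁ σ₂ lm x * cv 0,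
              cv 2 * fderiv ℝ (q6 σ₁ σ₂ lm) x (1, 0) - p6 σ₁ σ₂ lm x * cv 1, ?_⟩
            rw [hedec]
            have hq : cv 2 * q6 σ₁ σ₂ lm x = p6 σ₁ σ₂ lm x * cv 3 := by linarith
            simp only [smul_add, smul_smul]
            rw [show cv 2 * q6 σ₁ σ₂ lm x = p6 σ₁ σ₂ lm x * cv 3 from hq]
            linear_combination (norm := module) (p6 σ₁ σ₂ lm x) • hcsum'
          have hc12 : c1 * bB6 (ν x) (σ₁ x) + c2 * bB6 (ν x) (σ₂ x) = 0 := by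
            have h0 := congrArg (fun z => bB6 (ν x) z) hec
            simp only [bB6_smul_right, bB6_pair_right, hνe, mul_zero] at h0
            linarith [h0]
          have hpar : c1 * q6 σ₁ σ₂ lm x = c2 * p6 σ₁ σ₂ lm x := perp2 hc12 hpg (htrans x hx).1
          rcases not_and_or.mp hpcqc with hp0 | hq0
          · refine Submodule.mem_span_singleton.mpr ⟨c1 / (cv 2 * p6 σ₁ σ₂ lm x), ?_⟩
            have h0 : pu lm x = (cv 2)⁻¹ • (c1 • σ₁ x + c2 • σ₂ x) := by
              rw [← hec, smul_smul, inv_mul_cancel₀ h2, one_smul]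
            rw [h0, hrepr x hx]
            simp only [smul_add, smul_smul]
            have e1 : c1 / (cv 2 * p6 σ₁ σ₂ lm x) * p6 σ₁ σ₂ lm x = (cv 2)⁻¹ * c1 := by
              field_simp
            have e2 : c1 / (cv 2 * p6 σ₁ σ₂ lm x) * q6 σ₁ σ₂ lm x = (cv 2)⁻¹ * c2 := by
              field_simp
              linear_combination hpar
            rw [e1, e2]
          · refine Submodule.mem_span_singleton.mpr ⟨c2 / (cv 2 * q6 σ₁ σ₂ lm x), ?_⟩
            have h0 : pu lm x = (cv 2)⁻¹ • (c1 • σ₁ x + c2 • σ₂ x) := by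
              rw [← hec, smul_smul, inv_mul_cancel₀ h2, one_smul]
            rw [h0, hrepr x hx]
            simp only [smul_add, smul_smul]
            have e1 : c2 / (cv 2 * q6 σ₁ σ₂ lm x) * p6 σ₁ σ₂ lm x = (cv 2)⁻¹ * c1 := by
              field_simp
              linear_combination (-1) * hpar
            have e2 : c2 / (cv 2 * q6 σ₁ σ₂ lm x) * q6 σ₁ σ₂ lm x = (cv 2)⁻¹ * c2 := by
              field_simp
            rw [e1, e2]
        · -- cv 3 ≠ 0
          obtain ⟨c1, c2, hec⟩ : ∃ c1 c2 : ℝ, cv 3 • pu lm x = c1 • σ₁ x + c2 • σ₂ x := by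
            refine ⟨cv 3 * fderiv ℝ (p6 σ₁ σ₂ lm) x (1, 0) - q6 σ₁ σ₂ lm x * cv 0,
              cv 3 * fderiv ℝ (q6 σ₁ σ₂ lm) x (1, 0) - q6 σ₁ σ₂ lm x * cv 1, ?_⟩
            rw [hedec]
            have hq : cv 3 * p6 σ₁ σ₂ lm x = q6 σ₁ σ₂ lm x * cv 2 := by linarith
            simp only [smul_add, smul_smul]
            rw [show cv 3 * p6 σ₁ σ₂ lm x = q6 σ₁ σ₂ lm x * cv 2 from hq]
            linear_combination (norm := module) (q6 σ₁ σ₂ lm x) • hcsum'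
          have hc12 : c1 * bB6 (ν x) (σ₁ x) + c2 * bB6 (ν x) (σ₂ x) = 0 := by
            have h0 := congrArg (fun z => bB6 (ν x) z) hec
            simp only [bB6_smul_right, bB6_pair_right, hνe, mul_zero] at h0
            linarith [h0]
          have hpar : c1 * q6 σ₁ σ₂ lm x = c2 * p6 σ₁ σ₂ lm x := perp2 hc12 hpg (htrans x hx).1
          rcases not_and_or.mp hpcqc with hp0 | hq0
          · refine Submodule.mem_span_singleton.mpr ⟨c1 / (cv 3 * p6 σ₁ σ₂ lm x), ?_⟩
            have h0 : pu lm x = (cv 3)⁻¹ • (c1 • σ₁ x + c2 • σ₂ x) := by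
              rw [← hec, smul_smul, inv_mul_cancel₀ h3, one_smul]
            rw [h0, hrepr x hx]
            simp only [smul_add, smul_smul]
            have e1 : c1 / (cv 3 * p6 σ₁ σ₂ lm x) * p6 σ₁ σ₂ lm x = (cv 3)⁻¹ * c1 := by
              field_simp
            have e2 : c1 / (cv 3 * p6 σ₁ σ₂ lm x) * q6 σ₁ σ₂ lm x = (cv 3)⁻¹ * c2 := by
              field_simp
              linear_combination hpar
            rw [e1, e2]
          · refine Submodule.mem_span_singleton.mpr ⟨c2 / (cv 3 * q6 σ₁ σ₂ lm x), ?_⟩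
            have h0 : pu lm x = (cv 3)⁻¹ • (c1 • σ₁ x + c2 • σ₂ x) := by
              rw [← hec, smul_smul, inv_mul_cancel₀ h3, one_smul]
            rw [h0, hrepr x hx]
            simp only [smul_add, smul_smul]
            have e1 : c2 / (cv 3 * q6 σ₁ σ₂ lm x) * p6 σ₁ σ₂ lm x = (cv 3)⁻¹ * c1 := by
              field_simp
              linear_combination (-1) * hpar
            have e2 : c2 / (cv 3 * q6 σ₁ σ₂ lm x) * q6 σ₁ σ₂ lm x = (cv 3)⁻¹ * c2 := by
              field_simp
            rw [e1, e2]
      exact himm x hx (1, 0) honez hmem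
    constructor
    · have h1 : (cv 2 * q6 σ₁ σ₂ lm x - cv 3 * p6 σ₁ σ₂ lm x)
          * bB6 (mu6 σ₁ σ₂ ν P x • ν x - P) (pu σ₁ x) = 0 := by
        linear_combination (q6 σ₁ σ₂ lm x) * hrelA - cv 3 * hrelB
      rcases mul_eq_zero.mp h1 with h0 | h0
      · exact absurd h0 hdet
      · exact h0
    · have h1 : (cv 2 * q6 σ₁ σ₂ lm x - cv 3 * p6 σ₁ σ₂ lm x)
          * bB6 (mu6 σ₁ σ₂ ν P x • ν x - P) (pu σ₂ x) = 0 := by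
        linear_combination cv 2 * hrelB - (p6 σ₁ σ₂ lm x) * hrelA
      rcases mul_eq_zero.mp h1 with h0 | h0
      · exact absurd h0 hdet
      · exact h0
  -- constancy in the u-direction
  have hpul : ∀ x ∈ I₁ ×ˢ I₂, pu (ll6 σ₁ σ₂ ν P) x = 0 := by
    intro x hx
    have hxn : I₁ ×ˢ I₂ ∈ 𝓝 x := hUo.mem_nhds hx
    have hι : HasDerivAt (fun t : ℝ => ((t, x.2) : ℝ × ℝ)) (1, 0) x.1 :=
      HasDerivAt.prodMk (hasDerivAt_id x.1) (hasDerivAt_const x.1 x.2)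
    have hline : ∀ f : ℝ × ℝ → V6, DifferentiableAt ℝ f x →
        HasDerivAt (fun t => f (t, x.2)) (pu f x) x.1 := by
      intro f hf
      have h0 := hf.hasFDerivAt.comp_hasDerivAt x.1 hι
      exact h0
    have hdσ₁ : DifferentiableAt ℝ σ₁ x :=
      (h.smooth₁.contDiffAt hxn).differentiableAt (by simp)
    have hdσ₂ : DifferentiableAt ℝ σ₂ x :=
      (h.smooth₂.contDiffAt hxn).differentiableAt (by simp)
    have hdν : DifferentiableAt ℝ ν x :=
      (hνs.contDiffAt hxn).differentiableAt (by simp)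
    have hdl : DifferentiableAt ℝ (ll6 σ₁ σ₂ ν P) x :=
      (hsm.contDiffAt hxn).differentiableAt (by simp)
    have hL1 := hline σ₁ hdσ₁
    have hL2 := hline σ₂ hdσ₂
    have hLν : HasDerivAt (fun t => ν (t, x.2)) 0 x.1 := by
      have h0 := hline ν hdν; rwa [hνu x hx] at h0
    have hG1d : HasDerivAt (fun t => bB6 (ν (t, x.2)) (σ₁ (t, x.2)))
        (bB6 (ν x) (pu σ₁ x)) x.1 := by
      have h0 := hasDerivAt_bB6 hLν hL1
      simpa [bB6_zero_left] using h0
    have hG2d : HasDerivAt (fun t => bB6 (ν (t, x.2)) (σ₂ (t, x.2)))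
        (bB6 (ν x) (pu σ₂ x)) x.1 := by
      have h0 := hasDerivAt_bB6 hLν hL2
      simpa [bB6_zero_left] using h0
    have hH1d : HasDerivAt (fun t => bB6 (σ₁ (t, x.2)) P) (bB6 (pu σ₁ x) P) x.1 := by
      have h0 := hasDerivAt_bB6 hL1 (hasDerivAt_const x.1 P)
      simpa [bB6_zero_right] using h0
    have hH2d : HasDerivAt (fun t => bB6 (σ₂ (t, x.2)) P) (bB6 (pu σ₂ x) P) x.1 := by
      have h0 := hasDerivAt_bB6 hL2 (hasDerivAt_const x.1 P)
      simpa [bB6_zero_right] using h0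
    have hk1 : bB6 (pu σ₁ x) P = mu6 σ₁ σ₂ ν P x * bB6 (ν x) (pu σ₁ x) := by
      have h0 := (hKL x hx).1
      rw [bB6_sub_left, bB6_smul_left, bB6_comm P (pu σ₁ x)] at h0
      linarith
    have hk2 : bB6 (pu σ₂ x) P = mu6 σ₁ σ₂ ν P x * bB6 (ν x) (pu σ₂ x) := by
      have h0 := (hKL x hx).2
      rw [bB6_sub_left, bB6_smul_left, bB6_comm P (pu σ₂ x)] at h0
      linarith
    have hm1 := (hmu x hx).1
    have hm2 := (hmu x hx).2
    have hmud : HasDerivAt (fun t => mu6 σ₁ σ₂ ν P (t, x.2)) 0 x.1 := by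
      have hnum : HasDerivAt (fun t => bB6 (ν (t, x.2)) (σ₁ (t, x.2)) * bB6 (σ₁ (t, x.2)) P
          + bB6 (ν (t, x.2)) (σ₂ (t, x.2)) * bB6 (σ₂ (t, x.2)) P)
          (bB6 (ν x) (pu σ₁ x) * bB6 (σ₁ x) P + bB6 (ν x) (σ₁ x) * bB6 (pu σ₁ x) P
            + (bB6 (ν x) (pu σ₂ x) * bB6 (σ₂ x) P + bB6 (ν x) (σ₂ x) * bB6 (pu σ₂ x) P)) x.1 :=
        (hG1d.mul hH1d).add (hG2d.mul hH2d)
      have hden : HasDerivAt (fun t => bB6 (ν (t, x.2)) (σ₁ (t, x.2)) ^ 2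
          + bB6 (ν (t, x.2)) (σ₂ (t, x.2)) ^ 2)
          ((2 : ℝ) * bB6 (ν x) (σ₁ x) ^ (2 - 1) * bB6 (ν x) (pu σ₁ x)
            + (2 : ℝ) * bB6 (ν x) (σ₂ x) ^ (2 - 1) * bB6 (ν x) (pu σ₂ x)) x.1 :=
        (hG1d.pow 2).add (hG2d.pow 2)
      have hdiv := hnum.div hden (ne_of_gt (hT x hx))
      have h0 : HasDerivAt (fun t => mu6 σ₁ σ₂ ν P (t, x.2))
          (((bB6 (ν x) (pu σ₁ x) * bB6 (σ₁ x) P + bB6 (ν x) (σ₁ x) * bB6 (pu σ₁ x) P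
            + (bB6 (ν x) (pu σ₂ x) * bB6 (σ₂ x) P + bB6 (ν x) (σ₂ x) * bB6 (pu σ₂ x) P))
            * (bB6 (ν x) (σ₁ x) ^ 2 + bB6 (ν x) (σ₂ x) ^ 2)
            - (bB6 (ν x) (σ₁ x) * bB6 (σ₁ x) P + bB6 (ν x) (σ₂ x) * bB6 (σ₂ x) P)
              * ((2 : ℝ) * bB6 (ν x) (σ₁ x) ^ (2 - 1) * bB6 (ν x) (pu σ₁ x)
                + (2 : ℝ) * bB6 (ν x) (σ₂ x) ^ (2 - 1) * bB6 (ν x) (pu σ₂ x)))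
            / (bB6 (ν x) (σ₁ x) ^ 2 + bB6 (ν x) (σ₂ x) ^ 2) ^ 2) x.1 := hdiv
      have hval : ((bB6 (ν x) (pu σ₁ x) * bB6 (σ₁ x) P + bB6 (ν x) (σ₁ x) * bB6 (pu σ₁ x) P
            + (bB6 (ν x) (pu σ₂ x) * bB6 (σ₂ x) P + bB6 (ν x) (σ₂ x) * bB6 (pu σ₂ x) P))
            * (bB6 (ν x) (σ₁ x) ^ 2 + bB6 (ν x) (σ₂ x) ^ 2)
            - (bB6 (ν x) (σ₁ x) * bB6 (σ₁ x) P + bB6 (ν x) (σ₂ x) * bB6 (σ₂ x) P)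
              * ((2 : ℝ) * bB6 (ν x) (σ₁ x) ^ (2 - 1) * bB6 (ν x) (pu σ₁ x)
                + (2 : ℝ) * bB6 (ν x) (σ₂ x) ^ (2 - 1) * bB6 (ν x) (pu σ₂ x)))
            / (bB6 (ν x) (σ₁ x) ^ 2 + bB6 (ν x) (σ₂ x) ^ 2) ^ 2 = 0 := by
        rw [div_eq_zero_iff]
        left
        rw [hk1, hk2, hm1, hm2]
        norm_num
        ring
      rwa [hval] at h0
    have hβd : HasDerivAt (fun t => bB6 (ν (t, x.2)) P) 0 x.1 := by
      have h0 := hasDerivAt_bB6 hLν (hasDerivAt_const x.1 P)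
      simpa [bB6_zero_left, bB6_zero_right] using h0
    have hcd : HasDerivAt (fun t => cc6 σ₁ σ₂ ν P (t, x.2)) 0 x.1 := by
      have h1 := ((hasDerivAt_const x.1 (2 : ℝ)).mul hmud).mul hβd
      have h2 := ((hasDerivAt_const x.1 (1 : ℝ)).add h1).neg
      have h0 : HasDerivAt (fun t => cc6 σ₁ σ₂ ν P (t, x.2))
          (-(0 + ((0 * mu6 σ₁ σ₂ ν P x + 2 * 0) * bB6 (ν x) P
            + 2 * mu6 σ₁ σ₂ ν P x * 0))) x.1 := h2
      simpa using h0
    have hcne : cc6 σ₁ σ₂ ν P x ≠ 0 := ne_of_gt (hcpos x hx)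
    have hsqd : HasDerivAt (fun t => Real.sqrt (cc6 σ₁ σ₂ ν P (t, x.2))) 0 x.1 := by
      have h0 := (Real.hasDerivAt_sqrt hcne).comp x.1 hcd
      exact h0.congr_deriv (by simp)
    have hsqne : Real.sqrt (cc6 σ₁ σ₂ ν P x) ≠ 0 :=
      ne_of_gt (Real.sqrt_pos.mpr (hcpos x hx))
    have hrd : HasDerivAt (fun t => (Real.sqrt (cc6 σ₁ σ₂ ν P (t, x.2)))⁻¹) 0 x.1 := by
      have h0 := hsqd.inv hsqne
      exact h0.congr_deriv (by simp)
    have hwd : HasDerivAt (fun t => mu6 σ₁ σ₂ ν P (t, x.2) • ν (t, x.2) - P) (0 : V6) x.1 := by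
      have h0 := (hmud.smul hLν).sub_const P
      simpa using h0
    have hld : HasDerivAt (fun t => ll6 σ₁ σ₂ ν P (t, x.2)) (0 : V6) x.1 := by
      have h0 := hrd.smul hwd
      have h1 : HasDerivAt (fun t => ll6 σ₁ σ₂ ν P (t, x.2))
          ((Real.sqrt (cc6 σ₁ σ₂ ν P x))⁻¹ • (0 : V6)
            + (0 : ℝ) • (mu6 σ₁ σ₂ ν P x • ν x - P)) x.1 := h0
      simpa using h1
    exact (hline (ll6 σ₁ σ₂ ν P) hdl).unique hld
  exact ⟨ll6 σ₁ σ₂ ν P, hsm, hBll, hBl1, hBl2, hpul⟩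
end
end

section
/- Let I₁, I₂ ⊆ ℝ be open intervals and v₀ ∈ I₂. Let l : I₂ → V be smooth with B(l, l) = 1 and l′ nowhere zero, and let A : I₂ → End(V) be smooth with A(v₀) = id and A′(v) = −A(v) ∘ (l(v) ∧ l′(v)) for all v ∈ I₂ (the spherical evolution map along l based at v₀); set l₀ := l(v₀), and note each A(v) is invertible. Let σ₁, σ₂ : I₁ → V be smooth maps such that for all u ∈ I₁ and i, j ∈ {1,2}: σ₁(u), σ₂(u) are linearly independent, B(σᵢ(u), σⱼ(u)) = 0, B(σᵢ′(u), σⱼ(u)) = 0, B(σᵢ(u), l₀) = 0, and span{σ₁(u), σ₂(u), σ₁′(u), σ₂′(u)} is 3-dimensional (a Legendre curve frame lying in the linear sphere complex l₀^⊥). Assume the regularity condition: for every (u, v) ∈ I₁ × I₂ there is i ∈ {1,2} with B(l′(v), A(v)⁻¹σᵢ(u)) ≠ 0. Define τᵢ(u, v) := A(v)⁻¹(σᵢ(u)). Then (τ₁, τ₂) is a Legendre surface frame on I₁ × I₂; at every point both span{τ₁, τ₂, ∂τ₁/∂u, ∂τ₂/∂u} and span{τ₁, τ₂, ∂τ₁/∂v,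 ∂τ₂/∂v} are 3-dimensional (so (u, v) are curvature line coordinates); and B(l(v), τᵢ(u, v)) = 0 for all (u, v) and i, so, l being independent of u, the u-parameter lines are spherical curvature lines. -/
noncomputable section

lemma wedge6_apply (a b x : V6) : wedge6 a b x = bB6 a x • b - bB6 b x • a := rfl

lemma bB6_symm (x y : V6) : bB6 x y = bB6 y x := by simp only [bB6]; ring

lemma bB6_smul_sub_right (x y z : V6) (c d : ℝ) :
    bB6 x (c • y - d • z) = c * bB6 x y - d * bB6 x z := by
  simp only [bB6, Pi.sub_apply, Pi.smul_apply, smul_eq_mul]; ring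

lemma bB6_smul_sub_left (y z x : V6) (c d : ℝ) :
    bB6 (c • y - d • z) x = c * bB6 y x - d * bB6 z x := by
  simp only [bB6, Pi.sub_apply, Pi.smul_apply, smul_eq_mul]; ring

lemma bB6_comb3_right (x p q r : V6) (a b c : ℝ) :
    bB6 x (a • p + b • q + c • r) = a * bB6 x p + b * bB6 x q + c * bB6 x r := by
  simp only [bB6, Pi.add_apply, Pi.smul_apply, smul_eq_mul]; ring

lemma bB6_smul_left (x y : V6) (c : ℝ) : bB6 (c • x) y = c * bB6 x y := by
  simp only [bB6, Pi.smul_apply, smul_eq_mul]; ring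

lemma bB6_smul_right (x y : V6) (c : ℝ) : bB6 x (c • y) = c * bB6 x y := by
  simp only [bB6, Pi.smul_apply, smul_eq_mul]; ring

lemma bB6_comb2_right (x p q : V6) (a b : ℝ) :
    bB6 x (a • p + b • q) = a * bB6 x p + b * bB6 x q := by
  simp only [bB6, Pi.add_apply, Pi.smul_apply, smul_eq_mul]; ring

lemma bB6_wedge_skew (a b x y : V6) :
    bB6 (wedge6 a b x) y + bB6 x (wedge6 a b y) = 0 := by
  simp only [wedge6_apply, bB6, Pi.sub_apply, Pi.smul_apply, smul_eq_mul]; ring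

lemma hasDerivAt_bB6 {f g : ℝ → V6} {f' g' : V6} {v : ℝ}
    (hf : HasDerivAt f f' v) (hg : HasDerivAt g g' v) :
    HasDerivAt (fun t => bB6 (f t) (g t)) (bB6 f' (g v) + bB6 (f v) g') v := by
  have hfi : ∀ i : Fin 6, HasDerivAt (fun t => f t i) (f' i) v := fun i => by
    exact (ContinuousLinearMap.proj (R := ℝ) (φ := fun _ : Fin 6 => ℝ)
      i).hasFDerivAt.comp_hasDerivAt v hf
  have hgi : ∀ i : Fin 6, HasDerivAt (fun t => g t i) (g' i) v := fun i => by
    exact (ContinuousLinearMap.proj (R := ℝ) (φ := fun _ : Fin 6 => ℝ)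
      i).hasFDerivAt.comp_hasDerivAt v hg
  have H := ((((((hfi 0).mul (hgi 0)).add ((hfi 1).mul (hgi 1))).add
      ((hfi 2).mul (hgi 2))).add ((hfi 3).mul (hgi 3))).sub
      ((hfi 4).mul (hgi 4))).sub ((hfi 5).mul (hgi 5))
  have H2 : HasDerivAt (fun t => bB6 (f t) (g t))
      ((((f' 0 * g v 0 + f v 0 * g' 0) + (f' 1 * g v 1 + f v 1 * g' 1) +
        (f' 2 * g v 2 + f v 2 * g' 2) + (f' 3 * g v 3 + f v 3 * g' 3)) -
        (f' 4 * g v 4 + f v 4 * g' 4)) - (f' 5 * g v 5 + f v 5 * g' 5)) v := H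
  have heq : bB6 f' (g v) + bB6 (f v) g' =
      (((f' 0 * g v 0 + f v 0 * g' 0) + (f' 1 * g v 1 + f v 1 * g' 1) +
        (f' 2 * g v 2 + f v 2 * g' 2) + (f' 3 * g v 3 + f v 3 * g' 3)) -
        (f' 4 * g v 4 + f v 4 * g' 4)) - (f' 5 * g v 5 + f v 5 * g' 5) := by
    simp only [bB6]; ring
  rw [heq]; exact H2

lemma const_of_hasDerivAt_zero {s : Set ℝ} (ho : IsOpen s) (hc : Convex ℝ s)
    {f : ℝ → ℝ} (hf : ∀ v ∈ s, HasDerivAt f 0 v) {a b : ℝ} (ha : a ∈ s) (hb : b ∈ s) :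
    f a = f b := by
  apply hc.is_const_of_fderivWithin_eq_zero (𝕜 := ℝ)
    (fun v hv => ((hf v hv).differentiableAt).differentiableWithinAt) ?_ ha hb
  intro v hv
  rw [fderivWithin_of_isOpen ho hv, (hf v hv).hasFDerivAt.fderiv]
  ext
  simp

lemma range_three (a b c : V6) : Set.range ![a, b, c] = {a, b, c} := by
  ext x
  simp [Matrix.range_cons, Matrix.range_empty]
  tauto

/-- evolving an initial Legendre curve, lying in the linear sphere complex
`l₀^⊥`, by the (inverse of the) spherical evolution map `A` along `l` yields a Legendre
surface frame parametrised by curvature line coordinates whose `u`-parameter lines are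
spherical curvature lines (lying in the sphere complexes `l(v)^⊥`). -/
theorem stmt19 (I₁ I₂ : Set ℝ)
    (hI₁o : IsOpen I₁) (hI₁c : I₁.OrdConnected) (hI₁ne : I₁.Nonempty)
    (hI₂o : IsOpen I₂) (hI₂c : I₂.OrdConnected)
    (v₀ : ℝ) (hv₀ : v₀ ∈ I₂)
    (l : ℝ → V6) (hls : ContDiffOn ℝ (⊤ : ℕ∞) l I₂)
    (hlu : ∀ v ∈ I₂, bB6 (l v) (l v) = 1)
    (hl' : ∀ v ∈ I₂, deriv l v ≠ 0)
    (A : ℝ → V6 →L[ℝ] V6) (hAs : ContDiffOn ℝ (⊤ : ℕ∞) A I₂)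
    (hA0 : A v₀ = ContinuousLinearMap.id ℝ V6)
    (hA' : ∀ v ∈ I₂, deriv A v = -((A v).comp (wedge6 (l v) (deriv l v))))
    (Ainv : ℝ → V6 →L[ℝ] V6)
    (hAinv : ∀ v ∈ I₂, (Ainv v).comp (A v) = ContinuousLinearMap.id ℝ V6 ∧
      (A v).comp (Ainv v) = ContinuousLinearMap.id ℝ V6)
    (σ₁ σ₂ : ℝ → V6)
    (hσ₁s : ContDiffOn ℝ (⊤ : ℕ∞) σ₁ I₁) (hσ₂s : ContDiffOn ℝ (⊤ : ℕ∞) σ₂ I₁)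
    (hind : ∀ u ∈ I₁, ∀ a b : ℝ, a • σ₁ u + b • σ₂ u = 0 → a = 0 ∧ b = 0)
    (hiso : ∀ u ∈ I₁, bB6 (σ₁ u) (σ₁ u) = 0 ∧ bB6 (σ₁ u) (σ₂ u) = 0 ∧
      bB6 (σ₂ u) (σ₂ u) = 0)
    (hd : ∀ u ∈ I₁, bB6 (deriv σ₁ u) (σ₁ u) = 0 ∧ bB6 (deriv σ₁ u) (σ₂ u) = 0 ∧
      bB6 (deriv σ₂ u) (σ₁ u) = 0 ∧ bB6 (deriv σ₂ u) (σ₂ u) = 0)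
    (hl₀ : ∀ u ∈ I₁, bB6 (σ₁ u) (l v₀) = 0 ∧ bB6 (σ₂ u) (l v₀) = 0)
    (hrank : ∀ u ∈ I₁, Module.finrank ℝ
      ↥(Submodule.span ℝ ({σ₁ u, σ₂ u, deriv σ₁ u, deriv σ₂ u} : Set V6)) = 3)
    (hreg : ∀ u ∈ I₁, ∀ v ∈ I₂,
      bB6 (deriv l v) (Ainv v (σ₁ u)) ≠ 0 ∨ bB6 (deriv l v) (Ainv v (σ₂ u)) ≠ 0)
    (τ₁ τ₂ : ℝ × ℝ → V6)
    (hτ₁ : ∀ x : ℝ × ℝ, τ₁ x = Ainv x.2 (σ₁ x.1))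
    (hτ₂ : ∀ x : ℝ × ℝ, τ₂ x = Ainv x.2 (σ₂ x.1)) :
    LegendreSurfaceFrame (I₁ ×ˢ I₂) τ₁ τ₂ ∧
    (∀ x ∈ I₁ ×ˢ I₂,
      Module.finrank ℝ
        ↥(Submodule.span ℝ ({τ₁ x, τ₂ x, pu τ₁ x, pu τ₂ x} : Set V6)) = 3 ∧
      Module.finrank ℝ
        ↥(Submodule.span ℝ ({τ₁ x, τ₂ x, pv τ₁ x, pv τ₂ x} : Set V6)) = 3) ∧
    (∀ x ∈ I₁ ×ˢ I₂, bB6 (l x.2) (τ₁ x) = 0 ∧ bB6 (l x.2) (τ₂ x) = 0) := by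
  have hτ₁' : τ₁ = fun x : ℝ × ℝ => Ainv x.2 (σ₁ x.1) := funext hτ₁
  have hτ₂' : τ₂ = fun x : ℝ × ℝ => Ainv x.2 (σ₂ x.1) := funext hτ₂
  subst hτ₁' hτ₂'
  clear hτ₁ hτ₂
  set U : Set (ℝ × ℝ) := I₁ ×ˢ I₂ with hU
  have hUo : IsOpen U := hI₁o.prod hI₂o
  have hI₂conv : Convex ℝ I₂ := hI₂c.convex
  -- pointwise inverses
  have hAinvA : ∀ v ∈ I₂, ∀ x : V6, Ainv v (A v x) = x := by
    intro v hv x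
    have := DFunLike.congr_fun (hAinv v hv).1 x
    simpa using this
  have hAAinv : ∀ v ∈ I₂, ∀ x : V6, A v (Ainv v x) = x := by
    intro v hv x
    have := DFunLike.congr_fun (hAinv v hv).2 x
    simpa using this
  have hAinv0 : ∀ x : V6, Ainv v₀ x = x := by
    intro x
    have := hAinvA v₀ hv₀ x
    rwa [hA0] at this
  -- units
  have hunit : ∀ v ∈ I₂, ∃ u : (V6 →L[ℝ] V6)ˣ, (u : V6 →L[ℝ] V6) = A v ∧
      ((u⁻¹ : (V6 →L[ℝ] V6)ˣ) : V6 →L[ℝ] V6) = Ainv v := by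
    intro v hv
    refine ⟨⟨A v, Ainv v, ?_, ?_⟩, rfl, rfl⟩
    · rw [ContinuousLinearMap.mul_def, (hAinv v hv).2]; rfl
    · rw [ContinuousLinearMap.mul_def, (hAinv v hv).1]; rfl
  -- smoothness of Ainv on I₂
  have hAinvCD : ∀ v ∈ I₂, ContDiffAt ℝ (⊤ : ℕ∞) Ainv v := by
    intro v hv
    have hA_at : ContDiffAt ℝ (⊤ : ℕ∞) A v := hAs.contDiffAt (hI₂o.mem_nhds hv)
    obtain ⟨u, hu1, hu2⟩ := hunit v hv
    have h1 : ContDiffAt ℝ (⊤ : ℕ∞) (fun w => Ring.inverse (A w)) v := by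
      have := (contDiffAt_ringInverse ℝ (n := (⊤ : ℕ∞)) u)
      rw [hu1] at this
      exact this.comp v hA_at
    refine h1.congr_of_eventuallyEq ?_
    filter_upwards [hI₂o.mem_nhds hv] with w hw
    obtain ⟨uw, hw1, hw2⟩ := hunit w hw
    rw [← hw1, Ring.inverse_unit, hw2]
  have hAinvD : ∀ v ∈ I₂, HasDerivAt Ainv (deriv Ainv v) v := by
    intro v hv
    exact ((hAinvCD v hv).differentiableAt (by simp)).hasDerivAt
  have hAD : ∀ v ∈ I₂, HasDerivAt A (deriv A v) v := by
    intro v hv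
    exact ((hAs.contDiffAt (hI₂o.mem_nhds hv)).differentiableAt
      (by simp)).hasDerivAt
  have hlD : ∀ v ∈ I₂, HasDerivAt l (deriv l v) v := by
    intro v hv
    exact ((hls.contDiffAt (hI₂o.mem_nhds hv)).differentiableAt
      (by simp)).hasDerivAt
  -- derivative of Ainv
  have hAinv' : ∀ v ∈ I₂, HasDerivAt Ainv
      ((wedge6 (l v) (deriv l v)).comp (Ainv v)) v := by
    intro v hv
    have hD := hAinvD v hv
    have hmul : HasDerivAt (fun w => Ainv w * A w)
        (deriv Ainv v * A v + Ainv v * deriv A v) v := hD.mul (hAD v hv)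
    have hconst : HasDerivAt (fun w => Ainv w * A w) 0 v := by
      have hev : (fun w => Ainv w * A w) =ᶠ[nhds v] fun _ => 1 := by
        filter_upwards [hI₂o.mem_nhds hv] with w hw
        rw [ContinuousLinearMap.mul_def, (hAinv w hw).1]; rfl
      exact (hasDerivAt_const v (1 : V6 →L[ℝ] V6)).congr_of_eventuallyEq hev
    have heq : deriv Ainv v * A v + Ainv v * deriv A v = 0 := hmul.unique hconst
    have e2 : deriv Ainv v = (wedge6 (l v) (deriv l v)).comp (Ainv v) := by
      ext z
      have hz := DFunLike.congr_fun heq (Ainv v z)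
      simp only [ContinuousLinearMap.add_apply, ContinuousLinearMap.mul_apply,
        ContinuousLinearMap.zero_apply] at hz
      rw [hAAinv v hv z] at hz
      have hz2 : deriv A v (Ainv v z)
          = -(A v (wedge6 (l v) (deriv l v) (Ainv v z))) := by
        rw [hA' v hv]
        simp
      rw [hz2, map_neg, hAinvA v hv] at hz
      have hfin := add_neg_eq_zero.mp hz
      rw [hfin]
      simp
    rw [← e2]
    exact hD
  -- vector-valued derivative of v ↦ Ainv v x
  have hτv : ∀ v ∈ I₂, ∀ x : V6, HasDerivAt (fun w => Ainv w x)
      (wedge6 (l v) (deriv l v) (Ainv v x)) v := by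
    intro v hv x
    have := (hAinv' v hv).clm_apply (hasDerivAt_const v x)
    simpa using this
  -- B(l, l') = 0 on I₂
  have hll' : ∀ v ∈ I₂, bB6 (l v) (deriv l v) = 0 := by
    intro v hv
    have h := hasDerivAt_bB6 (hlD v hv) (hlD v hv)
    have hconst : HasDerivAt (fun t => bB6 (l t) (l t)) 0 v := by
      have hev : (fun t => bB6 (l t) (l t)) =ᶠ[nhds v] fun _ => 1 := by
        filter_upwards [hI₂o.mem_nhds hv] with w hw
        exact hlu w hw
      exact (hasDerivAt_const v (1 : ℝ)).congr_of_eventuallyEq hev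
    have heq := h.unique hconst
    have hs : bB6 (deriv l v) (l v) = bB6 (l v) (deriv l v) := bB6_symm _ _
    rw [hs] at heq
    linarith
  -- invariance of bB6 under Ainv
  have hBinv : ∀ v ∈ I₂, ∀ x y : V6, bB6 (Ainv v x) (Ainv v y) = bB6 x y := by
    intro v hv x y
    have key : ∀ w ∈ I₂, HasDerivAt (fun t => bB6 (Ainv t x) (Ainv t y)) 0 w := by
      intro w hw
      have h := hasDerivAt_bB6 (hτv w hw x) (hτv w hw y)
      have hz : bB6 (wedge6 (l w) (deriv l w) (Ainv w x)) (Ainv w y) +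
          bB6 (Ainv w x) (wedge6 (l w) (deriv l w) (Ainv w y)) = 0 :=
        bB6_wedge_skew _ _ _ _
      rw [hz] at h
      exact h
    have := const_of_hasDerivAt_zero hI₂o hI₂conv key hv hv₀
    rw [this, hAinv0 x, hAinv0 y]
  -- B(l v, Ainv v x) = 0 whenever B(l v₀, x) = 0
  have hlAinv : ∀ x : V6, bB6 (l v₀) x = 0 → ∀ v ∈ I₂, bB6 (l v) (Ainv v x) = 0 := by
    intro x hx v hv
    have key : ∀ w ∈ I₂, HasDerivAt (fun t => bB6 (l t) (Ainv t x)) 0 w := by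
      intro w hw
      have h := hasDerivAt_bB6 (hlD w hw) (hτv w hw x)
      have hz : bB6 (l w) (wedge6 (l w) (deriv l w) (Ainv w x))
          = - bB6 (deriv l w) (Ainv w x) := by
        rw [wedge6_apply, bB6_smul_sub_right, hlu w hw, hll' w hw]
        ring
      rw [hz] at h
      simpa using h
    have := const_of_hasDerivAt_zero hI₂o hI₂conv key hv hv₀
    rw [this, hAinv0 x, hx]
  -- derivative of σ's orthogonal to l₀
  have hl₀' : ∀ u ∈ I₁, bB6 (deriv σ₁ u) (l v₀) = 0 ∧ bB6 (deriv σ₂ u) (l v₀) = 0 := by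
    intro u hu
    constructor
    · have hσD : HasDerivAt σ₁ (deriv σ₁ u) u :=
        ((hσ₁s.contDiffAt (hI₁o.mem_nhds hu)).differentiableAt
          (by simp)).hasDerivAt
      have h := hasDerivAt_bB6 hσD (hasDerivAt_const u (l v₀))
      have hconst : HasDerivAt (fun t => bB6 (σ₁ t) (l v₀)) 0 u := by
        have hev : (fun t => bB6 (σ₁ t) (l v₀)) =ᶠ[nhds u] fun _ => 0 := by
          filter_upwards [hI₁o.mem_nhds hu] with w hw
          exact (hl₀ w hw).1
        exact (hasDerivAt_const u (0 : ℝ)).congr_of_eventuallyEq hev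
      have heq := h.unique hconst
      have hz : bB6 (σ₁ u) (0 : V6) = 0 := by simp [bB6]
      rw [hz] at heq
      linarith
    · have hσD : HasDerivAt σ₂ (deriv σ₂ u) u :=
        ((hσ₂s.contDiffAt (hI₁o.mem_nhds hu)).differentiableAt
          (by simp)).hasDerivAt
      have h := hasDerivAt_bB6 hσD (hasDerivAt_const u (l v₀))
      have hconst : HasDerivAt (fun t => bB6 (σ₂ t) (l v₀)) 0 u := by
        have hev : (fun t => bB6 (σ₂ t) (l v₀)) =ᶠ[nhds u] fun _ => 0 := by
          filter_upwards [hI₁o.mem_nhds hu] with w hw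
          exact (hl₀ w hw).2
        exact (hasDerivAt_const u (0 : ℝ)).congr_of_eventuallyEq hev
      have heq := h.unique hconst
      have hz : bB6 (σ₂ u) (0 : V6) = 0 := by simp [bB6]
      rw [hz] at heq
      linarith
  -- fderiv formula for τ's
  have hfder : ∀ (σ : ℝ → V6), ContDiffOn ℝ (⊤ : ℕ∞) σ I₁ → ∀ x ∈ U, ∀ X : ℝ × ℝ,
      fderiv ℝ (fun y : ℝ × ℝ => Ainv y.2 (σ y.1)) x X
        = X.1 • Ainv x.2 (deriv σ x.1)
          + X.2 • wedge6 (l x.2) (deriv l x.2) (Ainv x.2 (σ x.1)) := by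
    intro σ hσ x hx X
    have hx1 : x.1 ∈ I₁ := hx.1
    have hx2 : x.2 ∈ I₂ := hx.2
    have hc : HasFDerivAt (fun y : ℝ × ℝ => Ainv y.2)
        (((1 : ℝ →L[ℝ] ℝ).smulRight
          ((wedge6 (l x.2) (deriv l x.2)).comp (Ainv x.2))).comp
          (ContinuousLinearMap.snd ℝ ℝ ℝ)) x :=
      ((hAinv' x.2 hx2).hasFDerivAt).comp x (ContinuousLinearMap.snd ℝ ℝ ℝ).hasFDerivAt
    have hσD : HasDerivAt σ (deriv σ x.1) x.1 :=
      ((hσ.contDiffAt (hI₁o.mem_nhds hx1)).differentiableAt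
        (by simp)).hasDerivAt
    have hu : HasFDerivAt (fun y : ℝ × ℝ => σ y.1)
        (((1 : ℝ →L[ℝ] ℝ).smulRight (deriv σ x.1)).comp
          (ContinuousLinearMap.fst ℝ ℝ ℝ)) x :=
      (hσD.hasFDerivAt).comp x (ContinuousLinearMap.fst ℝ ℝ ℝ).hasFDerivAt
    have h := hc.clm_apply hu
    rw [h.fderiv]
    simp [ContinuousLinearMap.comp_apply, ContinuousLinearMap.add_apply,
      ContinuousLinearMap.flip_apply, ContinuousLinearMap.smulRight_apply,
      ContinuousLinearMap.one_apply, ContinuousLinearMap.smul_apply, map_smul]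
  -- differentiability of the τ maps on U (for pu/pv rewriting)
  have hpu : ∀ (σ : ℝ → V6), ContDiffOn ℝ (⊤ : ℕ∞) σ I₁ → ∀ x ∈ U,
      pu (fun y : ℝ × ℝ => Ainv y.2 (σ y.1)) x = Ainv x.2 (deriv σ x.1) := by
    intro σ hσ x hx
    rw [pu, hfder σ hσ x hx (1, 0)]
    simp
  have hpv : ∀ (σ : ℝ → V6), ContDiffOn ℝ (⊤ : ℕ∞) σ I₁ → ∀ x ∈ U,
      pv (fun y : ℝ × ℝ => Ainv y.2 (σ y.1)) x
        = wedge6 (l x.2) (deriv l x.2) (Ainv x.2 (σ x.1)) := by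
    intro σ hσ x hx
    rw [pv, hfder σ hσ x hx (0, 1)]
    simp
  -- spherical condition
  have hsph : ∀ x ∈ U, bB6 (l x.2) (Ainv x.2 (σ₁ x.1)) = 0 ∧
      bB6 (l x.2) (Ainv x.2 (σ₂ x.1)) = 0 := by
    intro x hx
    constructor
    · exact hlAinv _ (by rw [bB6_symm]; exact (hl₀ x.1 hx.1).1) x.2 hx.2
    · exact hlAinv _ (by rw [bB6_symm]; exact (hl₀ x.1 hx.1).2) x.2 hx.2
  -- wedge applied to τ is multiple of l
  have hwτ : ∀ x ∈ U, ∀ σv : V6, bB6 (l x.2) (Ainv x.2 σv) = 0 →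
      wedge6 (l x.2) (deriv l x.2) (Ainv x.2 σv)
        = - bB6 (deriv l x.2) (Ainv x.2 σv) • l x.2 := by
    intro x hx σv h0
    rw [wedge6_apply, h0, zero_smul, zero_sub, neg_smul]
  -- independence of τ's
  have hτind : ∀ x ∈ U, ∀ a b : ℝ,
      a • Ainv x.2 (σ₁ x.1) + b • Ainv x.2 (σ₂ x.1) = 0 → a = 0 ∧ b = 0 := by
    intro x hx a b hab
    apply hind x.1 hx.1 a b
    have := congrArg (A x.2) hab
    rw [map_add, map_smul, map_smul, hAAinv x.2 hx.2, hAAinv x.2 hx.2, map_zero] at this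
    exact this
  -- smoothness of τ's
  have hsm : ∀ (σ : ℝ → V6), ContDiffOn ℝ (⊤ : ℕ∞) σ I₁ →
      ContDiffOn ℝ (⊤ : ℕ∞) (fun y : ℝ × ℝ => Ainv y.2 (σ y.1)) U := by
    intro σ hσ x hx
    apply ContDiffAt.contDiffWithinAt
    exact ((hAinvCD x.2 hx.2).comp x contDiffAt_snd).clm_apply
      ((hσ.contDiffAt (hI₁o.mem_nhds hx.1)).comp x contDiffAt_fst)
  refine ⟨?frame, ?ranks, ?sph⟩
  case sph =>
    intro x hx
    exact hsph x hx
  case ranks =>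
    intro x hx
    constructor
    · -- u-rank
      -- build linear equiv from Ainv x.2
      let e : V6 ≃ₗ[ℝ] V6 :=
        { toFun := Ainv x.2
          map_add' := fun a b => map_add _ a b
          map_smul' := fun c a => map_smul _ c a
          invFun := A x.2
          left_inv := fun a => hAAinv x.2 hx.2 a
          right_inv := fun a => hAinvA x.2 hx.2 a }
      have him : ({Ainv x.2 (σ₁ x.1), Ainv x.2 (σ₂ x.1),
          Ainv x.2 (deriv σ₁ x.1), Ainv x.2 (deriv σ₂ x.1)} : Set V6)
          = (e : V6 →ₗ[ℝ] V6) '' ({σ₁ x.1, σ₂ x.1, deriv σ₁ x.1, deriv σ₂ x.1} : Set V6) := by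
        simp only [Set.image_insert_eq, Set.image_singleton]
        rfl
      rw [hpu _ hσ₁s x hx, hpu _ hσ₂s x hx, him, ← Submodule.map_span]
      rw [LinearEquiv.finrank_map_eq e]
      exact hrank x.1 hx.1
    · -- v-rank
      have h1 := hsph x hx
      set c₁ : ℝ := bB6 (deriv l x.2) (Ainv x.2 (σ₁ x.1)) with hc₁
      set c₂ : ℝ := bB6 (deriv l x.2) (Ainv x.2 (σ₂ x.1)) with hc₂
      have hpv₁ : pv (fun y : ℝ × ℝ => Ainv y.2 (σ₁ y.1)) x = -c₁ • l x.2 := by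
        rw [hpv _ hσ₁s x hx, hwτ x hx _ h1.1, hc₁]
      have hpv₂ : pv (fun y : ℝ × ℝ => Ainv y.2 (σ₂ y.1)) x = -c₂ • l x.2 := by
        rw [hpv _ hσ₂s x hx, hwτ x hx _ h1.2, hc₂]
      have hcs : c₁ ≠ 0 ∨ c₂ ≠ 0 := hreg x.1 hx.1 x.2 hx.2
      -- span equality with {τ₁, τ₂, l}
      set T : Submodule ℝ V6 :=
        Submodule.span ℝ ({Ainv x.2 (σ₁ x.1), Ainv x.2 (σ₂ x.1), l x.2} : Set V6) with hT
      have hST : Submodule.span ℝ ({Ainv x.2 (σ₁ x.1), Ainv x.2 (σ₂ x.1),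
          pv (fun y : ℝ × ℝ => Ainv y.2 (σ₁ y.1)) x,
          pv (fun y : ℝ × ℝ => Ainv y.2 (σ₂ y.1)) x} : Set V6) = T := by
        apply le_antisymm
        · rw [Submodule.span_le]
          intro z hz
          simp only [Set.mem_insert_iff, Set.mem_singleton_iff] at hz
          rcases hz with h | h | h | h
          · exact Submodule.subset_span (by rw [h]; left; rfl)
          · exact Submodule.subset_span (by rw [h]; right; left; rfl)
          · rw [h, hpv₁]
            exact Submodule.smul_mem _ _ (Submodule.subset_span (by right; right; rfl))
          · rw [h, hpv₂]
            exact Submodule.smul_mem _ _ (Submodule.subset_span (by right; right; rfl))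
        · rw [Submodule.span_le]
          intro z hz
          simp only [Set.mem_insert_iff, Set.mem_singleton_iff] at hz
          rcases hz with h | h | h
          · exact Submodule.subset_span (by rw [h]; left; rfl)
          · exact Submodule.subset_span (by rw [h]; right; left; rfl)
          · rw [h]
            rcases hcs with hc | hc
            · have : l x.2 = (-c₁)⁻¹ • (-c₁ • l x.2) := by
                rw [smul_smul, inv_mul_cancel₀ (by simpa using hc), one_smul]
              rw [this, ← hpv₁]
              exact Submodule.smul_mem _ _
                (Submodule.subset_span (by right; right; left; rfl))
            · have : l x.2 = (-c₂)⁻¹ • (-c₂ • l x.2) := by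
                rw [smul_smul, inv_mul_cancel₀ (by simpa using hc), one_smul]
              rw [this, ← hpv₂]
              exact Submodule.smul_mem _ _
                (Submodule.subset_span (by right; right; right; rfl))
      rw [hST, hT]
      -- finrank of T is 3
      have hli : LinearIndependent ℝ ![Ainv x.2 (σ₁ x.1), Ainv x.2 (σ₂ x.1), l x.2] := by
        rw [Fintype.linearIndependent_iff]
        intro g hg
        rw [Fin.sum_univ_three] at hg
        simp only [Matrix.cons_val_zero, Matrix.cons_val_one, Matrix.head_cons,
          Matrix.cons_val_two, Matrix.tail_cons] at hg
        have hpair := congrArg (fun z => bB6 (l x.2) z) hg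
        rw [bB6_comb3_right, h1.1, h1.2, hlu x.2 hx.2] at hpair
        have hg2 : g 2 = 0 := by simpa [bB6] using hpair
        rw [hg2, zero_smul, add_zero] at hg
        have := hτind x hx (g 0) (g 1) hg
        intro i
        fin_cases i
        · exact this.1
        · exact this.2
        · exact hg2
      have := finrank_span_eq_card (R := ℝ) hli
      rw [range_three] at this
      rw [this]
      simp
  case frame =>
    refine ⟨hUo, ?_, hsm _ hσ₁s, hsm _ hσ₂s, hτind, ?_, ?_, ?_, ?_, ?_, ?_, ?_, ?_, ?_, ?_, ?_, ?_⟩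
    · have h1 : IsConnected I₁ := ⟨hI₁ne, hI₁c.isPreconnected⟩
      have h2 : IsConnected I₂ := ⟨⟨v₀, hv₀⟩, hI₂c.isPreconnected⟩
      exact h1.prod h2
    · intro x hx; rw [hBinv x.2 hx.2]; exact (hiso x.1 hx.1).1
    · intro x hx; rw [hBinv x.2 hx.2]; exact (hiso x.1 hx.1).2.1
    · intro x hx; rw [hBinv x.2 hx.2]; exact (hiso x.1 hx.1).2.2
    · intro x hx; rw [hpu _ hσ₁s x hx, hBinv x.2 hx.2]; exact (hd x.1 hx.1).1
    · intro x hx; rw [hpu _ hσ₁s x hx, hBinv x.2 hx.2]; exact (hd x.1 hx.1).2.1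
    · intro x hx; rw [hpu _ hσ₂s x hx, hBinv x.2 hx.2]; exact (hd x.1 hx.1).2.2.1
    · intro x hx; rw [hpu _ hσ₂s x hx, hBinv x.2 hx.2]; exact (hd x.1 hx.1).2.2.2
    · intro x hx
      rw [hpv _ hσ₁s x hx, hwτ x hx _ (hsph x hx).1, bB6_smul_left,
        (hsph x hx).1, mul_zero]
    · intro x hx
      rw [hpv _ hσ₁s x hx, hwτ x hx _ (hsph x hx).1, bB6_smul_left,
        (hsph x hx).2, mul_zero]
    · intro x hx
      rw [hpv _ hσ₂s x hx, hwτ x hx _ (hsph x hx).2, bB6_smul_left,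
        (hsph x hx).1, mul_zero]
    · intro x hx
      rw [hpv _ hσ₂s x hx, hwτ x hx _ (hsph x hx).2, bB6_smul_left,
        (hsph x hx).2, mul_zero]
    · -- legendre condition
      intro x hx X hX ⟨⟨a₁, b₁, h₁⟩, ⟨a₂, b₂, h₂⟩⟩
      rw [hfder σ₁ hσ₁s x hx X] at h₁
      rw [hfder σ₂ hσ₂s x hx X] at h₂
      set c₁ : ℝ := bB6 (deriv l x.2) (Ainv x.2 (σ₁ x.1)) with hc₁
      set c₂ : ℝ := bB6 (deriv l x.2) (Ainv x.2 (σ₂ x.1)) with hc₂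
      have hw₁ := hwτ x hx (σ₁ x.1) (hsph x hx).1
      have hw₂ := hwτ x hx (σ₂ x.1) (hsph x hx).2
      rw [hw₁] at h₁
      rw [hw₂] at h₂
      -- pair with l x.2
      have hlσ₁' : bB6 (l x.2) (Ainv x.2 (deriv σ₁ x.1)) = 0 :=
        hlAinv _ (by rw [bB6_symm]; exact (hl₀' x.1 hx.1).1) x.2 hx.2
      have hlσ₂' : bB6 (l x.2) (Ainv x.2 (deriv σ₂ x.1)) = 0 :=
        hlAinv _ (by rw [bB6_symm]; exact (hl₀' x.1 hx.1).2) x.2 hx.2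
      have hx2c₁ : X.2 * c₁ = 0 := by
        have hp := congrArg (fun z => bB6 (l x.2) z) h₁
        simp only [bB6_comb2_right, bB6_smul_right] at hp
        rw [hlσ₁', (hsph x hx).1, (hsph x hx).2, hlu x.2 hx.2] at hp
        linear_combination -hp
      have hx2c₂ : X.2 * c₂ = 0 := by
        have hp := congrArg (fun z => bB6 (l x.2) z) h₂
        simp only [bB6_comb2_right, bB6_smul_right] at hp
        rw [hlσ₂', (hsph x hx).1, (hsph x hx).2, hlu x.2 hx.2] at hp
        linear_combination -hp
      by_cases hX2 : X.2 = 0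
      · -- X.1 ≠ 0 case: derivatives in span of σ's
        have hX1 : X.1 ≠ 0 := by
          intro h0
          exact hX (Prod.ext h0 hX2)
        rw [hX2, zero_smul, add_zero] at h₁ h₂
        -- apply A
        have hA₁ := congrArg (A x.2) h₁
        have hA₂ := congrArg (A x.2) h₂
        rw [map_smul, hAAinv x.2 hx.2, map_add, map_smul, map_smul,
          hAAinv x.2 hx.2, hAAinv x.2 hx.2] at hA₁ hA₂
        have hs₁ : deriv σ₁ x.1 = (X.1⁻¹ * a₁) • σ₁ x.1 + (X.1⁻¹ * b₁) • σ₂ x.1 := by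
          have := congrArg (fun z => X.1⁻¹ • z) hA₁
          simp only [smul_smul, inv_mul_cancel₀ hX1, one_smul, smul_add] at this
          exact this
        have hs₂ : deriv σ₂ x.1 = (X.1⁻¹ * a₂) • σ₁ x.1 + (X.1⁻¹ * b₂) • σ₂ x.1 := by
          have := congrArg (fun z => X.1⁻¹ • z) hA₂
          simp only [smul_smul, inv_mul_cancel₀ hX1, one_smul, smul_add] at this
          exact this
        -- then the span of all four is ≤ span {σ₁, σ₂} of finrank ≤ 2, contradiction
        have hle : Submodule.span ℝ ({σ₁ x.1, σ₂ x.1, deriv σ₁ x.1, deriv σ₂ x.1} : Set V6)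
            ≤ Submodule.span ℝ ({σ₁ x.1, σ₂ x.1} : Set V6) := by
          rw [Submodule.span_le]
          intro z hz
          simp only [Set.mem_insert_iff, Set.mem_singleton_iff] at hz
          have m1 : σ₁ x.1 ∈ Submodule.span ℝ ({σ₁ x.1, σ₂ x.1} : Set V6) :=
            Submodule.subset_span (by left; rfl)
          have m2 : σ₂ x.1 ∈ Submodule.span ℝ ({σ₁ x.1, σ₂ x.1} : Set V6) :=
            Submodule.subset_span (by right; rfl)
          rcases hz with h | h | h | h
          · rw [h]; exact m1
          · rw [h]; exact m2
          · rw [h, hs₁]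
            exact Submodule.add_mem _ (Submodule.smul_mem _ _ m1) (Submodule.smul_mem _ _ m2)
          · rw [h, hs₂]
            exact Submodule.add_mem _ (Submodule.smul_mem _ _ m1) (Submodule.smul_mem _ _ m2)
        have hfr : Module.finrank ℝ
            ↥(Submodule.span ℝ ({σ₁ x.1, σ₂ x.1, deriv σ₁ x.1, deriv σ₂ x.1} : Set V6))
            ≤ Module.finrank ℝ ↥(Submodule.span ℝ ({σ₁ x.1, σ₂ x.1} : Set V6)) :=
          Submodule.finrank_mono (R := ℝ) (M := V6) hle
        rw [hrank x.1 hx.1] at hfr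
        have hle2 : Module.finrank ℝ
            ↥(Submodule.span ℝ ({σ₁ x.1, σ₂ x.1} : Set V6)) ≤ 2 := by
          have := finrank_span_le_card (R := ℝ) ({σ₁ x.1, σ₂ x.1} : Set V6)
          apply this.trans
          rw [Set.toFinset_insert, Set.toFinset_singleton]
          exact (Finset.card_insert_le _ _).trans (by simp)
        omega
      · -- X.2 ≠ 0: both c's vanish, contradicting regularity
        have hc₁0 : c₁ = 0 := by
          rcases mul_eq_zero.mp hx2c₁ with h | h
          · exact absurd h hX2
          · exact h
        have hc₂0 : c₂ = 0 := by
          rcases mul_eq_zero.mp hx2c₂ with h | h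
          · exact absurd h hX2
          · exact h
        rcases hreg x.1 hx.1 x.2 hx.2 with h | h
        · exact h hc₁0
        · exact h hc₂0
end
end
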